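/- arXiv:math/0607235 — 6 statements merged into one kernel-verified Lean document; each statement's English description precedes it below -/
import Mathlib

section
/- The set k of formal series a = ∑_{j ≤ m} a_j ℏ^{-j} (with m ∈ ℤ, a_j ∈ ℂ) such that there exist constants C, ε > 0 with |a_j| ≤ C·ε^{-j}·(-j)! for all j < 0 is closed under addition and multiplication in ℂ[[ℏ]][ℏ^{-1}], where multiplication is given by the Cauchy product. -/
open Nat

private lemma zpow_eq_pow_toNat (x : ℝ) {j : ℤ} (hj : 0 ≤ j) : x ^ j = x ^ j.toNat := by
  rw [← zpow_natCast, Int.toNat_of_nonneg hj]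

private lemma factA1 (n K : ℕ) : (n + K)! ≤ n ! * (n + K) ^ K := by
  induction K with
  | zero => simp
  | succ K ih =>
    calc (n + (K + 1))! = (n + K + 1) * (n + K)! := rfl
    _ ≤ (n + K + 1) * (n ! * (n + K) ^ K) := Nat.mul_le_mul_left _ ih
    _ ≤ (n + K + 1) * (n ! * (n + K + 1) ^ K) :=
        Nat.mul_le_mul_left _ (Nat.mul_le_mul_left _ (Nat.pow_le_pow_left (Nat.le_succ _) _))
    _ = n ! * (n + (K + 1)) ^ (K + 1) := by ring

private lemma factA2 (n K : ℕ) : n + K ≤ (K + 1) * 2 ^ n := by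
  have h1 : n < 2 ^ n := Nat.lt_two_pow_self
  have h2 : K ≤ K * 2 ^ n := Nat.le_mul_of_pos_right _ (Nat.pow_pos (by norm_num))
  nlinarith

private lemma factA (n K L : ℕ) :
    (n + L + 1) * (n + K)! ≤ (L + 2) * (K + 1) ^ K * n ! * (2 ^ (K + 1)) ^ n := by
  have h3 : n + L + 1 ≤ (L + 2) * 2 ^ n := by
    have := factA2 n (L + 1); linarith
  have h1 : (n + K)! ≤ n ! * ((K + 1) * 2 ^ n) ^ K :=
    le_trans (factA1 n K) (Nat.mul_le_mul_left _ (Nat.pow_le_pow_left (factA2 n K) K))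
  calc (n + L + 1) * (n + K)! ≤ ((L + 2) * 2 ^ n) * (n ! * ((K + 1) * 2 ^ n) ^ K) :=
        Nat.mul_le_mul h3 h1
    _ = (L + 2) * (K + 1) ^ K * n ! * (2 ^ n) ^ (K + 1) := by
        rw [mul_pow, _root_.pow_succ' ((2:ℕ) ^ n) K]; ring
    _ = (L + 2) * (K + 1) ^ K * n ! * (2 ^ (K + 1)) ^ n := by
        rw [← pow_mul, ← pow_mul]
        congr 1
        ring

/-- The Gevrey-type growth condition defining the subfield `k` of `ℂ[[ℏ,ℏ^{-1}]`:
a Laurent series `a = ∑_j a.coeff j · ℏ^j` (so `a_j` in the paper is the coefficient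
of `ℏ^{-j}`, i.e. `a.coeff (-j)`) belongs to `k` iff there exist `C, ε > 0` with
`|a_j| ≤ C ε^{-j} (-j)!` for all `j < 0`. -/
def inGevreyClass (a : LaurentSeries ℂ) : Prop :=
  ∃ C > (0 : ℝ), ∃ ε > (0 : ℝ), ∀ j : ℤ, j < 0 →
    ‖a.coeff (-j)‖ ≤ C * ε ^ (-j) * ((-j).toNat !)

private lemma exists_support_bound (a : LaurentSeries ℂ) :
    ∃ N : ℕ, ∀ i : ℤ, i < -(N : ℤ) → a.coeff i = 0 := by
  rcases eq_or_ne a 0 with rfl | h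
  · exact ⟨0, fun i _ => rfl⟩
  · refine ⟨(-a.order).toNat, fun i hi => HahnSeries.coeff_eq_zero_of_lt_order ?_⟩
    have := Int.self_le_toNat (-a.order)
    omega

private lemma gevrey_unif {a : LaurentSeries ℂ} (ha : inGevreyClass a) :
    ∃ (N : ℕ) (ε₀ : ℝ), 1 ≤ ε₀ ∧ (∀ i : ℤ, i < -(N : ℤ) → a.coeff i = 0) ∧
      ∀ ε : ℝ, ε₀ ≤ ε → ∃ C : ℝ, 1 ≤ C ∧
        ∀ i : ℤ, ‖a.coeff i‖ ≤ C * ε ^ i * (i.toNat)! := by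
  obtain ⟨Ca, hCa, εa, hεa, hbound⟩ := ha
  obtain ⟨N, hN⟩ := exists_support_bound a
  refine ⟨N, max εa 1, le_max_right _ _, hN, fun ε hε => ?_⟩
  have hε1 : (1 : ℝ) ≤ ε := le_trans (le_max_right _ _) hε
  have hεa_le : εa ≤ ε := le_trans (le_max_left _ _) hε
  have hεpos : (0 : ℝ) < ε := lt_of_lt_of_le one_pos hε1
  set M : ℝ := ∑ i ∈ Finset.Icc (-(N : ℤ)) 0, ‖a.coeff i‖ with hM
  have hM0 : 0 ≤ M := Finset.sum_nonneg fun i _ => (norm_nonneg _)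
  set C : ℝ := max (max Ca 1) ((M + 1) * ε ^ (N : ℤ)) with hC
  have hC1 : (1 : ℝ) ≤ C := le_trans (le_max_right _ _) (le_max_left _ _)
  refine ⟨C, hC1, fun i => ?_⟩
  have hfact1 : (1 : ℝ) ≤ (i.toNat)! := by exact_mod_cast Nat.one_le_iff_ne_zero.mpr (Nat.factorial_ne_zero _)
  rcases le_or_gt 1 i with hi | hi
  · -- positive exponents: use the Gevrey bound
    have hb := hbound (-i) (by omega)
    rw [neg_neg] at hb
    have h1 : εa ^ i ≤ ε ^ i := by
      rw [zpow_eq_pow_toNat εa (by omega), zpow_eq_pow_toNat ε (by omega)]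
      exact pow_le_pow_left₀ (le_of_lt hεa) hεa_le _
    have hCa_le : Ca ≤ C := le_trans (le_max_left _ _) (le_max_left _ _)
    calc ‖a.coeff i‖ ≤ Ca * εa ^ i * (i.toNat)! := hb
      _ ≤ C * ε ^ i * (i.toNat)! := by
          have h2 : (0:ℝ) < ε ^ i := zpow_pos hεpos _
          have h3 : (0:ℝ) ≤ ((i.toNat)! : ℝ) := by positivity
          have := mul_le_mul (mul_le_mul hCa_le h1 (le_of_lt (zpow_pos hεa _)) (by linarith))
            (le_refl ((i.toNat)! : ℝ)) h3 (by positivity)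
          linarith
  · rcases lt_or_ge i (-(N : ℤ)) with hi2 | hi2
    · rw [hN i hi2]
      simp only [norm_zero]
      positivity
    · -- finitely many nonpositive coefficients
      have hmem : i ∈ Finset.Icc (-(N : ℤ)) 0 := Finset.mem_Icc.mpr ⟨hi2, by omega⟩
      have h1 : ‖a.coeff i‖ ≤ M :=
        Finset.single_le_sum (fun j _ => norm_nonneg (a.coeff j)) hmem
      have h2 : (1 : ℝ) ≤ ε ^ ((N : ℤ) + i) := one_le_zpow₀ hε1 (by omega)
      have h3 : (M + 1) * ε ^ ((N : ℤ) + i) ≤ C * ε ^ i := by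
        rw [zpow_add₀ (ne_of_gt hεpos), ← mul_assoc]
        have h4 : (M + 1) * ε ^ (N : ℤ) ≤ C := le_max_right _ _
        exact mul_le_mul_of_nonneg_right h4 (le_of_lt (zpow_pos hεpos _))
      have h5 : (0:ℝ) < C * ε ^ i := by
        have := zpow_pos hεpos i; nlinarith
      calc ‖a.coeff i‖ ≤ M := h1
        _ ≤ (M + 1) * ε ^ ((N : ℤ) + i) := by nlinarith
        _ ≤ C * ε ^ i := h3
        _ ≤ C * ε ^ i * (i.toNat)! := le_mul_of_one_le_right (le_of_lt h5) hfact1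

/-- `k` is closed under addition and multiplication in `ℂ[[ℏ]][ℏ^{-1}]`. -/
theorem stmt_4 (a b : LaurentSeries ℂ) (ha : inGevreyClass a) (hb : inGevreyClass b) :
    inGevreyClass (a + b) ∧ inGevreyClass (a * b) := by
  obtain ⟨Na, ε₀a, hε₀a, hsuppa, hA⟩ := gevrey_unif ha
  obtain ⟨Nb, ε₀b, hε₀b, hsuppb, hB⟩ := gevrey_unif hb
  set ε : ℝ := max ε₀a ε₀b with hεdef
  have hε1 : (1 : ℝ) ≤ ε := le_trans hε₀a (le_max_left _ _)
  have hεpos : (0 : ℝ) < ε := lt_of_lt_of_le one_pos hε1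
  obtain ⟨Ca, hCa, hboundA⟩ := hA ε (le_max_left _ _)
  obtain ⟨Cb, hCb, hboundB⟩ := hB ε (le_max_right _ _)
  constructor
  · -- addition
    refine ⟨Ca + Cb, by linarith, ε, hεpos, fun j hj => ?_⟩
    have h1 := hboundA (-j)
    have h2 := hboundB (-j)
    calc ‖(a + b).coeff (-j)‖
        = ‖a.coeff (-j) + b.coeff (-j)‖ := by rw [HahnSeries.coeff_add]
      _ ≤ ‖a.coeff (-j)‖ + ‖b.coeff (-j)‖ := norm_add_le _ _
      _ ≤ (Ca + Cb) * ε ^ (-j) * ((-j).toNat)! := by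
          rw [add_mul, add_mul]; exact add_le_add h1 h2
  · -- multiplication
    set K : ℕ := Na + Nb with hK
    refine ⟨Ca * Cb * ((K + 2) * (K + 1) ^ K : ℕ), by positivity, ε * 2 ^ (K + 1), by positivity,
      fun j hj => ?_⟩
    set n : ℤ := -j with hn
    have hn1 : 1 ≤ n := by omega
    set m : ℕ := n.toNat with hm
    have hnm : n = (m : ℤ) := (Int.toNat_of_nonneg (by omega)).symm
    set S := Finset.antidiagonal a.isPWO_support b.isPWO_support n with hS
    -- term bound
    have hterm : ∀ p ∈ S, ‖a.coeff p.1 * b.coeff p.2‖ ≤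
        Ca * Cb * ε ^ n * ((m + K)! : ℝ) := by
      intro p hp
      rw [Finset.mem_antidiagonal] at hp
      obtain ⟨hp1, hp2, hp3⟩ := hp
      have hla : -(Na : ℤ) ≤ p.1 := by
        by_contra h
        exact hp1 (hsuppa p.1 (by omega))
      have hlb : -(Nb : ℤ) ≤ p.2 := by
        by_contra h
        exact hp2 (hsuppb p.2 (by omega))
      have hfa : p.1.toNat ! * p.2.toNat ! ≤ (m + K)! := by
        calc p.1.toNat ! * p.2.toNat ! ≤ (p.1.toNat + p.2.toNat)! :=
              Nat.le_of_dvd (Nat.factorial_pos _) (Nat.factorial_mul_factorial_dvd_factorial_add _ _)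
          _ ≤ (m + K)! := Nat.factorial_le (by omega)
      have h1 := hboundA p.1
      have h2 := hboundB p.2
      calc ‖a.coeff p.1 * b.coeff p.2‖
          = ‖a.coeff p.1‖ * ‖b.coeff p.2‖ := norm_mul _ _
        _ ≤ (Ca * ε ^ p.1 * (p.1.toNat)!) * (Cb * ε ^ p.2 * (p.2.toNat)!) :=
            mul_le_mul h1 h2 (norm_nonneg _) (by positivity)
        _ = Ca * Cb * (ε ^ p.1 * ε ^ p.2) * ((p.1.toNat ! : ℝ) * (p.2.toNat ! : ℝ)) := by ring
        _ = Ca * Cb * ε ^ n * ((p.1.toNat ! * p.2.toNat ! : ℕ) : ℝ) := by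
            rw [← zpow_add₀ (ne_of_gt hεpos), hp3]; push_cast; ring
        _ ≤ Ca * Cb * ε ^ n * ((m + K)! : ℝ) := by
            have hpos : (0:ℝ) ≤ Ca * Cb * ε ^ n :=
              le_of_lt (mul_pos (mul_pos (by linarith) (by linarith)) (zpow_pos hεpos n))
            exact mul_le_mul_of_nonneg_left (by exact_mod_cast hfa) hpos
    -- cardinality bound
    have hcard : S.card ≤ m + K + 1 := by
      have hsub : S.card ≤ (Finset.Icc (-(Na : ℤ)) (n + Nb)).card := by
        apply Finset.card_le_card_of_injOn (fun p => p.1)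
        · intro p hp
          rw [Finset.mem_coe, Finset.mem_antidiagonal] at hp
          obtain ⟨hp1, hp2, hp3⟩ := hp
          have hla : -(Na : ℤ) ≤ p.1 := by
            by_contra h
            exact hp1 (hsuppa p.1 (by omega))
          have hlb : -(Nb : ℤ) ≤ p.2 := by
            by_contra h
            exact hp2 (hsuppb p.2 (by omega))
          exact Finset.mem_Icc.mpr ⟨hla, (show p.1 ≤ n + Nb by omega)⟩
        · intro p hp q hq hpq
          simp only [Finset.mem_coe, hS, Finset.mem_antidiagonal] at hp hq
          have : p.2 = q.2 := by
            have := hp.2.2; have := hq.2.2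
            simp only at hpq
            omega
          exact Prod.ext hpq this
      rw [Int.card_Icc] at hsub
      omega
    -- sum bound
    have hsum : ‖(a * b).coeff n‖ ≤
        (S.card : ℝ) * (Ca * Cb * ε ^ n * ((m + K)! : ℝ)) := by
      calc ‖(a * b).coeff n‖
          = ‖∑ p ∈ S, a.coeff p.1 * b.coeff p.2‖ := by rw [HahnSeries.coeff_mul]
        _ ≤ ∑ p ∈ S, ‖a.coeff p.1 * b.coeff p.2‖ := norm_sum_le _ _
        _ ≤ S.card • (Ca * Cb * ε ^ n * ((m + K)! : ℝ)) := Finset.sum_le_card_nsmul S _ _ hterm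
        _ = (S.card : ℝ) * (Ca * Cb * ε ^ n * ((m + K)! : ℝ)) := nsmul_eq_mul _ _
    have hBpos : (0:ℝ) ≤ Ca * Cb * ε ^ n * ((m + K)! : ℝ) := by
      have := zpow_pos hεpos n
      have : (0:ℝ) < ε ^ n := zpow_pos hεpos n
      positivity
    have hnat : ((m + K + 1) * (m + K)! : ℕ) ≤ ((K + 2) * (K + 1) ^ K * m ! * (2 ^ (K + 1)) ^ m : ℕ) :=
      factA m K K
    have hε_eq : ε ^ n = ε ^ m := zpow_eq_pow_toNat ε (by omega)
    calc ‖(a * b).coeff n‖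
        ≤ (S.card : ℝ) * (Ca * Cb * ε ^ n * ((m + K)! : ℝ)) := hsum
      _ ≤ ((m + K + 1 : ℕ) : ℝ) * (Ca * Cb * ε ^ n * ((m + K)! : ℝ)) := by
          exact mul_le_mul_of_nonneg_right (by exact_mod_cast hcard) hBpos
      _ = (Ca * Cb * ε ^ m) * (((m + K + 1) * (m + K)! : ℕ) : ℝ) := by
          rw [hε_eq]; push_cast; ring
      _ ≤ (Ca * Cb * ε ^ m) * (((K + 2) * (K + 1) ^ K * m ! * (2 ^ (K + 1)) ^ m : ℕ) : ℝ) := by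
          apply mul_le_mul_of_nonneg_left (by exact_mod_cast hnat)
          positivity
      _ = Ca * Cb * ((K + 2) * (K + 1) ^ K : ℕ) * (ε * 2 ^ (K + 1)) ^ n * (m ! : ℝ) := by
          rw [zpow_eq_pow_toNat _ (show (0:ℤ) ≤ n by omega), ← hm, mul_pow]
          push_cast
          ring
end

section
/- If a = ∑_{j ≤ m} a_j ℏ^{-j} is a nonzero element of the ring k (satisfying the factorial growth condition |a_j| ≤ C ε^{-j}(-j)! for j < 0), then its multiplicative inverse in ℂ[[ℏ]][ℏ^{-1}] also satisfies a factorial growth condition of the same type; hence k is a field. -/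
/-!
Write `a = X ^ d * p` with `p` a power series with nonzero constant term. The growth condition
survives multiplication by `X ^ d` because `(n + e)! ≤ 2 ^ (n + e) * n ! * e !`, so it suffices
to show that `p⁻¹` satisfies it when `p` does. The coefficients of `q = p⁻¹` obey
`q n = -(p 0)⁻¹ * ∑_{1 ≤ i ≤ n} p i * q (n - i)`; if `‖p i‖ ≤ M * E ^ i * i !`, then
`i ! * (n - i)! ≤ n !` and a geometric series in `t = E / F` give, by strong induction,
`‖q n‖ ≤ ‖p 0‖⁻¹ * F ^ n * n !` with `F = E * (1 + ‖p 0‖⁻¹ * M)`.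
-/

open Nat

open Finset PowerSeries LaurentSeries

theorem Nat.factorial_add_le_two_pow_mul (n e : ℕ) : (n + e)! ≤ 2 ^ (n + e) * n ! * e ! := by
  rw [← add_choose_mul_factorial_mul_factorial]
  gcongr
  exact choose_le_two_pow _ _

namespace PowerSeries

theorem coeff_inv_eq_sum_Ico {K : Type*} [Field K] (q : K⟦X⟧) {n : ℕ} (hn : n ≠ 0) :
    coeff n q⁻¹ =
      -(constantCoeff q)⁻¹ * ∑ i ∈ Ico 1 (n + 1), coeff i q * coeff (n - i) q⁻¹ := by
  rw [coeff_inv, if_neg hn, Nat.sum_antidiagonal_eq_sum_range_succ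
    (fun i j => if j < n then coeff i q * coeff j q⁻¹ else 0), range_eq_Ico,
    sum_eq_sum_Ico_succ_bot n.succ_pos]
  simp only [Nat.sub_zero, lt_irrefl, if_false, zero_add]
  refine congrArg _ (sum_congr rfl fun i hi => if_pos ?_)
  simp only [mem_Ico] at hi
  omega

variable {𝕜 : Type*} [NormedField 𝕜]

def IsGevrey (p : 𝕜⟦X⟧) : Prop :=
  ∃ C > (0 : ℝ), ∃ E > (0 : ℝ), ∀ n, ‖coeff n p‖ ≤ C * E ^ n * n !

theorem norm_coeff_inv_le {p : 𝕜⟦X⟧} (hp : constantCoeff p ≠ 0) {M E : ℝ} (hM : 0 < M)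
    (hE : 0 < E) (hb : ∀ n, ‖coeff n p‖ ≤ M * E ^ n * n !) (n : ℕ) :
    ‖coeff n p⁻¹‖ ≤
      ‖constantCoeff p‖⁻¹ * (E * (1 + ‖constantCoeff p‖⁻¹ * M)) ^ n * n ! := by
  set r := ‖constantCoeff p‖⁻¹
  set F := E * (1 + r * M)
  set t := (1 + r * M)⁻¹
  have hr : 0 < r := inv_pos.2 (norm_pos_iff.2 hp)
  have hF : 0 < F := by positivity
  have hs : 1 < 1 + r * M := lt_add_of_pos_right 1 (mul_pos hr hM)
  have hEF : E = F * t := by simp only [F, t]; field_simp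
  have ht0 : 0 < t := by positivity
  have ht1 : t < 1 := inv_lt_one_of_one_lt₀ hs
  have h1t : 1 - t = r * M * t := by simp only [t]; field_simp; ring
  have hgeom : r * M * (t / (1 - t)) = 1 := by
    rw [h1t, mul_div_assoc', div_self (by positivity)]
  clear_value F t
  induction n using Nat.strong_induction_on with
  | _ n ih =>
  rcases eq_or_ne n 0 with rfl | hn
  · simp [r]
  have hterm : ∀ i ∈ Ico 1 (n + 1),
      ‖coeff i p * coeff (n - i) p⁻¹‖ ≤ r * M * F ^ n * n ! * t ^ i := by
    intro i hi
    obtain ⟨hi1, hin⟩ : 1 ≤ i ∧ i ≤ n := by simp only [mem_Ico] at hi; omega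
    have hfact : (i ! : ℝ) * (n - i)! ≤ n ! := by
      exact_mod_cast Nat.le_of_dvd n.factorial_pos (Nat.factorial_mul_factorial_dvd_factorial hin)
    calc ‖coeff i p * coeff (n - i) p⁻¹‖
        ≤ (M * E ^ i * i !) * (r * F ^ (n - i) * (n - i)!) := by
          rw [norm_mul]
          exact mul_le_mul (hb i) (ih _ (by omega)) (norm_nonneg _) (by positivity)
      _ = r * M * (F ^ (n - i) * F ^ i) * t ^ i * ((i ! : ℝ) * (n - i)!) := by
          rw [hEF]
          ring
      _ ≤ r * M * F ^ n * n ! * t ^ i := by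
          rw [← pow_add, Nat.sub_add_cancel hin, mul_right_comm _ (t ^ i)]
          gcongr
  calc ‖coeff n p⁻¹‖ = r * ‖∑ i ∈ Ico 1 (n + 1), coeff i p * coeff (n - i) p⁻¹‖ := by
        rw [coeff_inv_eq_sum_Ico p hn, norm_mul, norm_neg, norm_inv]
    _ ≤ r * ∑ i ∈ Ico 1 (n + 1), r * M * F ^ n * n ! * t ^ i := by
        gcongr
        exact (norm_sum_le _ _).trans (sum_le_sum hterm)
    _ = r * F ^ n * n ! * (r * M * ∑ i ∈ Ico 1 (n + 1), t ^ i) := by rw [← mul_sum]; ring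
    _ ≤ r * F ^ n * n ! * (r * M * (t / (1 - t))) := by
        gcongr
        simpa using geom_sum_Ico_le_of_lt_one (m := 1) (n := n + 1) ht0.le ht1
    _ = r * F ^ n * n ! := by rw [hgeom, mul_one]

theorem IsGevrey.inv {p : 𝕜⟦X⟧} (hp : p.IsGevrey) (h0 : constantCoeff p ≠ 0) :
    p⁻¹.IsGevrey := by
  obtain ⟨M, hM, E, hE, hb⟩ := hp
  have hr : 0 < ‖constantCoeff p‖⁻¹ := inv_pos.2 (norm_pos_iff.2 h0)
  exact ⟨_, hr, _, by positivity, norm_coeff_inv_le h0 hM hE hb⟩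

end PowerSeries

namespace LaurentSeries

theorem constantCoeff_powerSeriesPart_ne_zero {R : Type*} [Semiring R] {x : R⸨X⸩}
    (hx : x ≠ 0) : constantCoeff x.powerSeriesPart ≠ 0 := by
  rw [← coeff_zero_eq_constantCoeff_apply, powerSeriesPart_coeff, Nat.cast_zero, add_zero]
  exact mt HahnSeries.coeff_order_eq_zero.1 hx

theorem inv_eq_single_mul_ofPowerSeries_inv {K : Type*} [Field K] {x : K⸨X⸩} (hx : x ≠ 0) :
    x⁻¹ = HahnSeries.single (-x.order) 1 *
      HahnSeries.ofPowerSeries ℤ K x.powerSeriesPart⁻¹ := by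
  refine (eq_inv_of_mul_eq_one_left ?_).symm
  calc _ = HahnSeries.ofPowerSeries ℤ K x.powerSeriesPart⁻¹ *
        (HahnSeries.single (-x.order) 1 * x) := by ring
    _ = 1 := by
      rw [← ofPowerSeries_powerSeriesPart, ← map_mul,
        PowerSeries.inv_mul_cancel _ (constantCoeff_powerSeriesPart_ne_zero hx), map_one]

end LaurentSeries

theorem inGevreyClass_iff_nat {a : LaurentSeries ℂ} :
    inGevreyClass a ↔
      ∃ C > (0 : ℝ), ∃ ε > (0 : ℝ), ∀ n : ℕ, 0 < n → ‖a.coeff n‖ ≤ C * ε ^ n * n ! := by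
  unfold inGevreyClass
  refine exists_congr fun C => and_congr_right fun _ =>
    exists_congr fun ε => and_congr_right fun _ => ?_
  refine ⟨fun h n hn => ?_, fun h j hj => ?_⟩
  · simpa using h (-n) (by omega)
  · obtain ⟨n, hn⟩ := Int.eq_ofNat_of_zero_le (neg_nonneg.2 hj.le)
    rw [hn]
    simpa using h n (by omega)

theorem inGevreyClass_of_forall_lt {a : LaurentSeries ℂ} (N : ℕ) {C ε : ℝ} (hC : 0 ≤ C)
    (hε : 1 ≤ ε) (h : ∀ n : ℕ, N < n → ‖a.coeff n‖ ≤ C * ε ^ n * n !) : inGevreyClass a := by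
  set B := ∑ i ∈ range (N + 1), ‖a.coeff i‖
  have hB : 0 ≤ B := sum_nonneg fun _ _ => norm_nonneg _
  refine inGevreyClass_iff_nat.2 ⟨C + B + 1, by positivity, ε, by positivity, fun n _ => ?_⟩
  rcases lt_or_ge N n with hN | hN
  · calc ‖a.coeff n‖ ≤ C * ε ^ n * n ! := h n hN
      _ ≤ (C + B + 1) * ε ^ n * n ! := by gcongr; linarith
  · have h1 : 1 ≤ ε ^ n * n ! :=
      one_le_mul_of_one_le_of_one_le (one_le_pow₀ hε) (by exact_mod_cast n.factorial_pos)
    calc ‖a.coeff n‖ ≤ B :=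
          single_le_sum (f := fun i : ℕ => ‖a.coeff i‖) (fun _ _ => norm_nonneg _)
            (mem_range.2 (by omega))
      _ ≤ (C + B + 1) * (ε ^ n * n !) := by nlinarith
      _ = (C + B + 1) * ε ^ n * n ! := by ring

theorem inGevreyClass.exists_one_le {a : LaurentSeries ℂ} (ha : inGevreyClass a) :
    ∃ C > (0 : ℝ), ∃ ε ≥ (1 : ℝ), ∀ n : ℕ, 0 < n → ‖a.coeff n‖ ≤ C * ε ^ n * n ! := by
  obtain ⟨C, hC, ε, hε, h⟩ := inGevreyClass_iff_nat.1 ha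
  refine ⟨C, hC, max ε 1, le_max_right _ _, fun n hn => (h n hn).trans ?_⟩
  gcongr
  exact le_max_left _ _

theorem inGevreyClass.single_one_mul {a : LaurentSeries ℂ} (ha : inGevreyClass a) (d : ℤ) :
    inGevreyClass (HahnSeries.single d 1 * a) := by
  obtain ⟨C, hC, ε, hε, h⟩ := ha.exists_one_le
  set e := (-d).toNat
  refine inGevreyClass_of_forall_lt d.toNat (C := C * (2 * ε) ^ e * e !) (ε := 2 * ε)
    (by positivity) (by linarith) fun n hn => ?_
  obtain ⟨k, hk⟩ : ∃ k : ℕ, (n : ℤ) - d = k := ⟨(n - d).toNat, by omega⟩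
  have hkn : k ≤ n + e := by omega
  have hfact : (k ! : ℝ) ≤ 2 ^ (n + e) * n ! * e ! := by
    exact_mod_cast (Nat.factorial_le hkn).trans (Nat.factorial_add_le_two_pow_mul n e)
  rw [HahnSeries.coeff_single_mul, one_mul, hk]
  calc ‖a.coeff k‖ ≤ C * ε ^ k * k ! := h k (by omega)
    _ ≤ C * ε ^ (n + e) * (2 ^ (n + e) * n ! * e !) := by gcongr
    _ = C * (2 * ε) ^ e * e ! * (2 * ε) ^ n * n ! := by ring

theorem inGevreyClass_ofPowerSeries_iff {p : PowerSeries ℂ} :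
    inGevreyClass (HahnSeries.ofPowerSeries ℤ ℂ p) ↔ p.IsGevrey := by
  constructor
  · intro hp
    obtain ⟨C, hC, ε, hε, h⟩ := hp.exists_one_le
    refine ⟨C + ‖coeff 0 p‖, by positivity, ε, by positivity, fun n => ?_⟩
    rcases Nat.eq_zero_or_pos n with rfl | hn
    · simpa using hC.le
    · have := h n hn
      rw [HahnSeries.ofPowerSeries_apply_coeff] at this
      exact this.trans (by gcongr; simp)
  · rintro ⟨C, hC, E, hE, h⟩
    exact inGevreyClass_iff_nat.2 ⟨C, hC, E, hE, fun n _ => by simpa using h n⟩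

/-- The inverse of a nonzero element of `k` again lies in `k`; hence `k` is a field. -/
theorem stmt_5 (a : LaurentSeries ℂ) (ha : inGevreyClass a) (h0 : a ≠ 0) :
    inGevreyClass a⁻¹ := by
  have hp : a.powerSeriesPart.IsGevrey := by
    rw [← inGevreyClass_ofPowerSeries_iff, ofPowerSeries_powerSeriesPart]
    exact ha.single_one_mul _
  rw [inv_eq_single_mul_ofPowerSeries_inv h0]
  exact (inGevreyClass_ofPowerSeries_iff.2
    (hp.inv (constantCoeff_powerSeriesPart_ne_zero h0))).single_one_mul _
end

section
/- Let f_j(t), j ∈ ℤ, be holomorphic functions on the disc {|t| ≤ η} satisfying: (a) there exist C, ε > 0 with sup_{|t|≤η}|f_j(t)| ≤ C ε^{-j}(-j)! for all j < 0, and (b) there exist M, R > 0 with |f_j(t)| ≤ M (R^j/j!)|t|^j for |t| ≤ η and all j ≥ 0. Similarly for g_j with the same type of bounds. Then for each k < 0 the series h_k(t) = ∑_{i+j=k} f_i(t) g_j(t) converges uniformly on {|t| ≤ η̃} with η̃ = min(η, 1/(2Rε)), and there exist C', ε' > 0 with sup_{|t|≤η̃}|h_k(t)| ≤ C' (ε')^{-k}(-k)!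 for all k < 0. -/
open Nat Metric Filter

/-!
Fix `k = -m < 0` and `|t| ≤ η̃`, so that `2εR|t| ≤ 1`. Every term `f_i g_{k-i}` is at most
`(MC + C²) (4ε)^m m! (3/4)^|i|`. When one index is `a ≥ 0` and the other is `-(a + m)`, the
factor `(a+m)!/a!` is controlled by `(a+m)! 2^a ≤ a! m! 3^(a+m)` (the term `2^a` of `(2+1)^(a+m)`),
and `(εR|t|)^a ≤ 2^-a` supplies the remaining decay; when both indices are negative,
`b! c! ≤ (b+c)!`. The weights `(3/4)^|i|` are summable over `ℤ`, which gives uniform convergence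
by the M-test and the bound with `ε' = 4ε`.
-/

theorem Nat.choose_mul_two_pow_le_three_pow (n k : ℕ) : n.choose k * 2 ^ k ≤ 3 ^ n := by
  rcases lt_or_ge n k with hnk | hkn
  · simp [Nat.choose_eq_zero_of_lt hnk]
  calc n.choose k * 2 ^ k = 2 ^ k * 1 ^ (n - k) * n.choose k := by ring
    _ ≤ ∑ j ∈ Finset.range (n + 1), 2 ^ j * 1 ^ (n - j) * n.choose j :=
      Finset.single_le_sum (f := fun j => 2 ^ j * 1 ^ (n - j) * n.choose j)
        (fun _ _ => Nat.zero_le _) (Finset.mem_range.mpr (by omega))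
    _ = (2 + 1) ^ n := by rw [add_pow]; simp
    _ = 3 ^ n := rfl

theorem Nat.add_factorial_mul_two_pow_le (a m : ℕ) :
    (a + m)! * 2 ^ a ≤ a ! * m ! * 3 ^ (a + m) := by
  calc (a + m)! * 2 ^ a = (a + m).choose a * 2 ^ a * (a ! * m !) := by
        rw [← Nat.add_choose_mul_factorial_mul_factorial a m, Nat.choose_symm_add]; ring
    _ ≤ 3 ^ (a + m) * (a ! * m !) :=
        Nat.mul_le_mul_right _ (Nat.choose_mul_two_pow_le_three_pow _ _)
    _ = a ! * m ! * 3 ^ (a + m) := by ring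

theorem summable_pow_natAbs {q : ℝ} (hq₀ : 0 ≤ q) (hq₁ : q < 1) :
    Summable fun i : ℤ => q ^ i.natAbs := by
  have hgeom := summable_geometric_of_lt_one hq₀ hq₁
  exact .of_nat_of_neg (by simpa using hgeom) (by simpa using hgeom)

section TermBounds

variable {C ε M R : ℝ}

theorem mul_bound_pos_neg_le (hC : 0 ≤ C) (hε : 0 ≤ ε) (hM : 0 ≤ M) (hR : 0 ≤ R) {r : ℝ}
    (hr : 0 ≤ r) (hεRr : 2 * ε * R * r ≤ 1) (a m : ℕ) :
    M * R ^ a / a ! * r ^ a * (C * ε ^ (a + m) * (a + m)!) ≤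
      M * C * (4 * ε) ^ m * m ! * (3 / 4) ^ (a + m) := by
  have hfact : ((a + m)! : ℝ) * 2 ^ a ≤ a ! * m ! * 3 ^ (a + m) := by
    exact_mod_cast Nat.add_factorial_mul_two_pow_le a m
  have hsmall : (2 * ε * R * r) ^ a ≤ 1 := pow_le_one₀ (by positivity) hεRr
  calc M * R ^ a / a ! * r ^ a * (C * ε ^ (a + m) * (a + m)!)
      = M * C * ε ^ m / (a ! * 4 ^ a) * (((a + m)! : ℝ) * 2 ^ a) * (2 * ε * R * r) ^ a := by
        rw [show (4 : ℝ) ^ a = 2 ^ a * 2 ^ a by rw [← mul_pow]; norm_num]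
        field_simp
        ring
    _ ≤ M * C * ε ^ m / (a ! * 4 ^ a) * (a ! * m ! * 3 ^ (a + m)) * 1 := by gcongr
    _ = M * C * (4 * ε) ^ m * m ! * (3 / 4) ^ (a + m) := by
        rw [div_pow, mul_pow, pow_add, pow_add]
        field_simp

theorem mul_bound_neg_neg_le (hε : 0 ≤ ε) (b c : ℕ) :
    C * ε ^ b * b ! * (C * ε ^ c * c !) ≤ C ^ 2 * (4 * ε) ^ (b + c) * (b + c)! * (3 / 4) ^ b := by
  have hfact : (b ! : ℝ) * c ! ≤ (b + c)! := by
    exact_mod_cast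
      Nat.le_of_dvd (Nat.factorial_pos _) (Nat.factorial_mul_factorial_dvd_factorial_add b c)
  have hone : (1 : ℝ) ≤ 3 ^ b * 4 ^ c := one_le_mul_of_one_le_of_one_le
    (one_le_pow₀ (by norm_num)) (one_le_pow₀ (by norm_num))
  calc C * ε ^ b * b ! * (C * ε ^ c * c !) = C ^ 2 * ε ^ (b + c) * ((b ! : ℝ) * c !) * 1 := by
        ring
    _ ≤ C ^ 2 * ε ^ (b + c) * (b + c)! * (3 ^ b * 4 ^ c) := by gcongr
    _ = C ^ 2 * (4 * ε) ^ (b + c) * (b + c)! * (3 / 4) ^ b := by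
        rw [div_pow, mul_pow, pow_add, pow_add]
        field_simp

variable {f g : ℤ → ℂ → ℂ} {t : ℂ}

theorem norm_coeff_natCast_le
    (hpos : ∀ j : ℤ, 0 ≤ j → ‖f j t‖ ≤ M * R ^ j.toNat / (j.toNat !) * ‖t‖ ^ j.toNat) (n : ℕ) :
    ‖f n t‖ ≤ M * R ^ n / n ! * ‖t‖ ^ n := by
  simpa using hpos n (Int.natCast_nonneg n)

theorem norm_coeff_neg_natCast_le
    (hneg : ∀ j : ℤ, j < 0 → ‖f j t‖ ≤ C * ε ^ (-j) * ((-j).toNat !)) {n : ℕ} (hn : 0 < n) :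
    ‖f (-n) t‖ ≤ C * ε ^ n * n ! := by
  simpa using hneg (-n) (by omega)

theorem norm_mul_coeff_le (hC : 0 ≤ C) (hε : 0 ≤ ε) (hM : 0 ≤ M) (hR : 0 ≤ R)
    (ht : 2 * ε * R * ‖t‖ ≤ 1)
    (hfneg : ∀ j : ℤ, j < 0 → ‖f j t‖ ≤ C * ε ^ (-j) * ((-j).toNat !))
    (hgneg : ∀ j : ℤ, j < 0 → ‖g j t‖ ≤ C * ε ^ (-j) * ((-j).toNat !))
    (hfpos : ∀ j : ℤ, 0 ≤ j → ‖f j t‖ ≤ M * R ^ j.toNat / (j.toNat !) * ‖t‖ ^ j.toNat)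
    (hgpos : ∀ j : ℤ, 0 ≤ j → ‖g j t‖ ≤ M * R ^ j.toNat / (j.toNat !) * ‖t‖ ^ j.toNat)
    {m : ℕ} (hm : 0 < m) (i : ℤ) :
    ‖f i t * g (-m - i) t‖ ≤ (M * C + C ^ 2) * (4 * ε) ^ m * m ! * (3 / 4) ^ i.natAbs := by
  rw [norm_mul]
  rcases le_or_gt 0 i with hi | hi
  · obtain ⟨a, rfl⟩ := Int.eq_ofNat_of_zero_le hi
    rw [show -(m : ℤ) - a = -((a + m : ℕ) : ℤ) by push_cast; ring, Int.natAbs_natCast]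
    calc ‖f a t‖ * ‖g (-((a + m : ℕ) : ℤ)) t‖
        ≤ M * R ^ a / a ! * ‖t‖ ^ a * (C * ε ^ (a + m) * (a + m)!) :=
          mul_le_mul (norm_coeff_natCast_le hfpos a) (norm_coeff_neg_natCast_le hgneg (by omega))
            (norm_nonneg _) (by positivity)
      _ ≤ M * C * (4 * ε) ^ m * m ! * (3 / 4) ^ (a + m) :=
          mul_bound_pos_neg_le hC hε hM hR (norm_nonneg t) ht a m
      _ ≤ (M * C + C ^ 2) * (4 * ε) ^ m * m ! * (3 / 4) ^ a := by
          gcongr ?_ * _ * _ * ?_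
          · exact le_add_of_nonneg_right (sq_nonneg C)
          · exact pow_le_pow_of_le_one (by norm_num) (by norm_num) (Nat.le_add_right a m)
  rcases le_or_gt i (-m) with hik | hik
  · obtain ⟨a, rfl⟩ : ∃ a : ℕ, i = -((a + m : ℕ) : ℤ) := ⟨(-m - i).toNat, by omega⟩
    rw [show -(m : ℤ) - -((a + m : ℕ) : ℤ) = a by push_cast; ring, Int.natAbs_neg,
      Int.natAbs_natCast]
    calc ‖f (-((a + m : ℕ) : ℤ)) t‖ * ‖g a t‖
        ≤ M * R ^ a / a ! * ‖t‖ ^ a * (C * ε ^ (a + m) * (a + m)!) := by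
          rw [mul_comm]
          exact mul_le_mul (norm_coeff_natCast_le hgpos a)
            (norm_coeff_neg_natCast_le hfneg (by omega)) (norm_nonneg _) (by positivity)
      _ ≤ M * C * (4 * ε) ^ m * m ! * (3 / 4) ^ (a + m) :=
          mul_bound_pos_neg_le hC hε hM hR (norm_nonneg t) ht a m
      _ ≤ (M * C + C ^ 2) * (4 * ε) ^ m * m ! * (3 / 4) ^ (a + m) := by
          gcongr
          exact le_add_of_nonneg_right (sq_nonneg C)
  · obtain ⟨b, c, rfl, rfl, hb, hc⟩ : ∃ b c : ℕ, i = -(b : ℤ) ∧ m = b + c ∧ 0 < b ∧ 0 < c :=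
      ⟨(-i).toNat, (i + m).toNat, by omega, by omega, by omega, by omega⟩
    rw [show -((b + c : ℕ) : ℤ) - -(b : ℤ) = -(c : ℤ) by push_cast; ring, Int.natAbs_neg,
      Int.natAbs_natCast]
    calc ‖f (-(b : ℤ)) t‖ * ‖g (-(c : ℤ)) t‖ ≤ C * ε ^ b * b ! * (C * ε ^ c * c !) :=
          mul_le_mul (norm_coeff_neg_natCast_le hfneg hb) (norm_coeff_neg_natCast_le hgneg hc)
            (norm_nonneg _) (by positivity)
      _ ≤ C ^ 2 * (4 * ε) ^ (b + c) * (b + c)! * (3 / 4) ^ b := mul_bound_neg_neg_le hε b c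
      _ ≤ (M * C + C ^ 2) * (4 * ε) ^ (b + c) * (b + c)! * (3 / 4) ^ b := by
          gcongr
          exact le_add_of_nonneg_left (mul_nonneg hM hC)

end TermBounds

theorem stmt_8_general (f g : ℤ → ℂ → ℂ) (η C ε M R : ℝ)
    (hC : 0 < C) (hε : 0 < ε) (hM : 0 < M) (hR : 0 < R)
    (hfneg : ∀ j : ℤ, j < 0 → ∀ t ∈ closedBall (0 : ℂ) η,
      ‖f j t‖ ≤ C * ε ^ (-j) * ((-j).toNat !))
    (hgneg : ∀ j : ℤ, j < 0 → ∀ t ∈ closedBall (0 : ℂ) η,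
      ‖g j t‖ ≤ C * ε ^ (-j) * ((-j).toNat !))
    (hfpos : ∀ j : ℤ, 0 ≤ j → ∀ t ∈ closedBall (0 : ℂ) η,
      ‖f j t‖ ≤ M * R ^ j.toNat / (j.toNat !) * ‖t‖ ^ j.toNat)
    (hgpos : ∀ j : ℤ, 0 ≤ j → ∀ t ∈ closedBall (0 : ℂ) η,
      ‖g j t‖ ≤ M * R ^ j.toNat / (j.toNat !) * ‖t‖ ^ j.toNat) :
    ∃ h : ℤ → ℂ → ℂ,
      (∀ k : ℤ, k < 0 →
        TendstoUniformlyOn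
          (fun (s : Finset ℤ) (t : ℂ) => ∑ i ∈ s, f i t * g (k - i) t)
          (h k) atTop (closedBall 0 (min η (1 / (2 * R * ε))))) ∧
      ∃ C' > (0 : ℝ), ∃ ε' > (0 : ℝ), ∀ k : ℤ, k < 0 →
        ∀ t ∈ closedBall (0 : ℂ) (min η (1 / (2 * R * ε))),
          ‖h k t‖ ≤ C' * ε' ^ (-k) * ((-k).toNat !) := by
  set K := M * C + C ^ 2
  have hq := summable_pow_natAbs (q := 3 / 4) (by norm_num) (by norm_num)
  have hterm : ∀ k : ℤ, k < 0 → ∀ i : ℤ, ∀ t ∈ closedBall (0 : ℂ) (min η (1 / (2 * R * ε))),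
      ‖f i t * g (k - i) t‖ ≤ K * (4 * ε) ^ (-k) * (-k).toNat ! * (3 / 4) ^ i.natAbs := by
    intro k hk i t ht
    obtain ⟨m, hkm⟩ : ∃ m : ℕ, k = -m := ⟨(-k).toNat, by omega⟩
    subst hkm
    rw [mem_closedBall_zero_iff, le_min_iff] at ht
    have hεRt : 2 * ε * R * ‖t‖ ≤ 1 := by
      rw [le_div_iff₀ (by positivity)] at ht
      linarith [ht.2]
    have ht' : t ∈ closedBall (0 : ℂ) η := mem_closedBall_zero_iff.mpr ht.1
    simpa using norm_mul_coeff_le hC.le hε.le hM.le hR.le hεRt (hfneg · · t ht')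
      (hgneg · · t ht') (hfpos · · t ht') (hgpos · · t ht') (by omega : 0 < m) i
  refine ⟨fun k t => ∑' i, f i t * g (k - i) t,
    fun k hk => tendstoUniformlyOn_tsum (hq.mul_left _) (hterm k hk),
    K * ∑' i : ℤ, (3 / 4 : ℝ) ^ i.natAbs,
    by positivity [hq.tsum_pos (fun _ => by positivity) 0 (by norm_num)], 4 * ε, by positivity,
    fun k hk t ht => ?_⟩
  calc ‖∑' i, f i t * g (k - i) t‖
      ≤ ∑' i : ℤ, K * (4 * ε) ^ (-k) * (-k).toNat ! * (3 / 4 : ℝ) ^ i.natAbs :=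
        tsum_of_norm_bounded (hq.mul_left _).hasSum (hterm k hk · t ht)
    _ = (K * ∑' i : ℤ, (3 / 4 : ℝ) ^ i.natAbs) * (4 * ε) ^ (-k) * (-k).toNat ! := by
        rw [tsum_mul_left]; ring

/-- Negative-index coefficients of the product of two order-0 symbols: if the `f_j, g_j`
are holomorphic on `{|t| ≤ η}` with `|f_j|, |g_j| ≤ C ε^{-j} (-j)!` for `j < 0` and
`|f_j|, |g_j| ≤ M (R^j/j!) |t|^j` for `j ≥ 0`, then for every `k < 0` the series
`h_k = ∑_{i+j=k} f_i g_j` converges uniformly on `{|t| ≤ η̃}`, `η̃ = min(η, 1/(2Rε))`,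
and there are `C', ε' > 0` with `sup_{|t|≤η̃} |h_k| ≤ C' ε'^{-k} (-k)!` for all `k < 0`. -/
theorem stmt_8 (f g : ℤ → ℂ → ℂ) (η C ε M R : ℝ)
    (hη : 0 < η) (hC : 0 < C) (hε : 0 < ε) (hM : 0 < M) (hR : 0 < R)
    (hf : ∀ j : ℤ, DifferentiableOn ℂ (f j) (closedBall 0 η))
    (hg : ∀ j : ℤ, DifferentiableOn ℂ (g j) (closedBall 0 η))
    (hfneg : ∀ j : ℤ, j < 0 → ∀ t ∈ closedBall (0 : ℂ) η,
      ‖f j t‖ ≤ C * ε ^ (-j) * ((-j).toNat !))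
    (hgneg : ∀ j : ℤ, j < 0 → ∀ t ∈ closedBall (0 : ℂ) η,
      ‖g j t‖ ≤ C * ε ^ (-j) * ((-j).toNat !))
    (hfpos : ∀ j : ℤ, 0 ≤ j → ∀ t ∈ closedBall (0 : ℂ) η,
      ‖f j t‖ ≤ M * R ^ j.toNat / (j.toNat !) * ‖t‖ ^ j.toNat)
    (hgpos : ∀ j : ℤ, 0 ≤ j → ∀ t ∈ closedBall (0 : ℂ) η,
      ‖g j t‖ ≤ M * R ^ j.toNat / (j.toNat !) * ‖t‖ ^ j.toNat) :
    ∃ h : ℤ → ℂ → ℂ,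
      (∀ k : ℤ, k < 0 →
        TendstoUniformlyOn
          (fun (s : Finset ℤ) (t : ℂ) => ∑ i ∈ s, f i t * g (k - i) t)
          (h k) atTop (closedBall 0 (min η (1 / (2 * R * ε))))) ∧
      ∃ C' > (0 : ℝ), ∃ ε' > (0 : ℝ), ∀ k : ℤ, k < 0 →
        ∀ t ∈ closedBall (0 : ℂ) (min η (1 / (2 * R * ε))),
          ‖h k t‖ ≤ C' * ε' ^ (-k) * ((-k).toNat !) :=
  stmt_8_general f g η C ε M R hC hε hM hR hfneg hgneg hfpos hgpos
end

section
/- Let f_j(t), g_j(t) (j ∈ ℤ) be holomorphic on {|t| ≤ η} with bounds |f_j|, |g_j| ≤ C ε^{-j}(-j)! for j < 0 and |f_j|, |g_j| ≤ M (R^j/j!)|t|^j for j ≥ 0. Then for each k ≥ 0 the series h_k(t) = ∑_{i+j=k} f_i(t) g_j(t) converges uniformly on {|t| ≤ η̃}, η̃ = min(η, 1/(2Rε)), and satisfies |h_k(t)| ≤ (M² + 2CM·Rη̃ε/(1−Rη̃ε)) · ((2R)^k/k!) |t|^k for |t| ≤ η̃. -/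
open Nat Metric Filter

/-!
Fix `k ≥ 0` and `|t| ≤ η̃`, and put `q = Rη̃ε ≤ 1/2`. For `0 ≤ i ≤ k` the term `f_i g_{k-i}` is
bounded by `M² R^k/(i!(k-i)!) |t|^k = M² (R^k/k!) C(k,i) |t|^k`, and these sum to `M² (2R)^k/k! |t|^k`.
For `i = -m < 0` one factor is bounded by `C ε^m m!` and the other by `M R^{k+m}/(k+m)! |t|^{k+m}`;
since `m! k! ≤ (k+m)!` and `|t|^m ≤ η̃^m`, the term is at most `CM (R^k/k!) q^m |t|^k`, a geometric
tail. The case `i > k` is the same with `f` and `g` exchanged. The resulting `ℤ`-indexed majorant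
(times `η̃^k`) gives uniform convergence, and its sum gives the bound.
-/

def NegCoeffBound (C ε η : ℝ) (F : ℤ → ℂ → ℂ) : Prop :=
  ∀ j : ℤ, j < 0 → ∀ t ∈ closedBall (0 : ℂ) η, ‖F j t‖ ≤ C * ε ^ (-j) * ((-j).toNat !)

def PosCoeffBound (M R η : ℝ) (F : ℤ → ℂ → ℂ) : Prop :=
  ∀ j : ℤ, 0 ≤ j → ∀ t ∈ closedBall (0 : ℂ) η,
    ‖F j t‖ ≤ M * R ^ j.toNat / (j.toNat !) * ‖t‖ ^ j.toNat

def tailMajorant (K q : ℝ) (i : ℤ) : ℝ := if i < 0 then K * q ^ (-i).toNat else 0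

def binomialMajorant (c : ℝ) (n : ℕ) (i : ℤ) : ℝ := if 0 ≤ i then c * n.choose i.toNat else 0

section Majorants

variable {K q c : ℝ}

lemma tailMajorant_nonneg (hK : 0 ≤ K) (hq : 0 ≤ q) (i : ℤ) : 0 ≤ tailMajorant K q i := by
  unfold tailMajorant; split <;> positivity

lemma binomialMajorant_nonneg (hc : 0 ≤ c) (n : ℕ) (i : ℤ) : 0 ≤ binomialMajorant c n i := by
  unfold binomialMajorant; split <;> positivity

lemma hasSum_tailMajorant (hq₀ : 0 ≤ q) (hq₁ : q < 1) :
    HasSum (tailMajorant K q) (K * q / (1 - q)) := by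
  have hnat : HasSum (fun m : ℕ => tailMajorant K q m) 0 := by
    convert hasSum_zero with m
    simp [tailMajorant]
  have hneg : HasSum (fun m : ℕ => tailMajorant K q (-(m + 1))) (K * q * (1 - q)⁻¹) := by
    have hterm (m : ℕ) : tailMajorant K q (-(m + 1)) = K * q * q ^ m := by
      rw [tailMajorant, if_pos (by omega), show (-(-((m : ℤ) + 1))).toNat = m + 1 by omega,
        pow_succ]
      ring
    simpa only [hterm] using (hasSum_geometric_of_lt_one hq₀ hq₁).mul_left (K * q)
  simpa [div_eq_mul_inv] using hnat.of_nat_of_neg_add_one hneg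

lemma hasSum_tailMajorant_sub (hq₀ : 0 ≤ q) (hq₁ : q < 1) (k : ℤ) :
    HasSum (fun i => tailMajorant K q (k - i)) (K * q / (1 - q)) :=
  (Equiv.subLeft k).hasSum_iff (f := tailMajorant K q) |>.mpr (hasSum_tailMajorant hq₀ hq₁)

lemma hasSum_binomialMajorant (c : ℝ) (n : ℕ) :
    HasSum (binomialMajorant c n) (c * 2 ^ n) := by
  have hnat : HasSum (fun j : ℕ => binomialMajorant c n j) (c * 2 ^ n) := by
    have hsupp : ∀ j ∉ Finset.range (n + 1), binomialMajorant c n j = 0 := fun j hj => by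
      simp [binomialMajorant, Nat.choose_eq_zero_of_lt (by simpa using hj : n < j)]
    have hsum : ∑ j ∈ Finset.range (n + 1), binomialMajorant c n j = c * 2 ^ n := by
      simp [binomialMajorant, ← Finset.mul_sum, ← Nat.cast_sum, Nat.sum_range_choose]
    exact hsum ▸ hasSum_sum_of_ne_finset_zero hsupp
  have hneg : HasSum (fun m : ℕ => binomialMajorant c n (-(m + 1))) 0 := by
    convert hasSum_zero with m
    exact if_neg (by omega)
  simpa using hnat.of_nat_of_neg_add_one hneg

end Majorants

lemma factorial_div_factorial_add_le (n m : ℕ) : (m ! : ℝ) / (n + m)! ≤ 1 / n ! := by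
  rw [div_le_div_iff₀ (by positivity) (by positivity), one_mul, add_comm]
  exact_mod_cast Nat.le_of_dvd (Nat.factorial_pos _) (Nat.factorial_mul_factorial_dvd_factorial_add m n)

lemma mul_le_of_neg_pos_bounds {C ε M R ρ T x y : ℝ} (hC : 0 ≤ C) (hM : 0 ≤ M) (hR : 0 ≤ R)
    (hε : 0 ≤ ε) (hT : 0 ≤ T) (hTρ : T ≤ ρ) {n m : ℕ} (hx : x ≤ C * ε ^ m * m !)
    (hy : y ≤ M * R ^ (n + m) / (n + m)! * T ^ (n + m)) (hy₀ : 0 ≤ y) :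
    x * y ≤ C * M * R ^ n / n ! * (R * ρ * ε) ^ m * T ^ n :=
  calc x * y ≤ C * ε ^ m * m ! * (M * R ^ (n + m) / (n + m)! * T ^ (n + m)) :=
        mul_le_mul hx hy hy₀ (by positivity)
    _ = C * M * R ^ n * T ^ n * (ε ^ m * R ^ m) * (T ^ m * ((m ! : ℝ) / (n + m)!)) := by
        rw [pow_add, pow_add]; ring
    _ ≤ C * M * R ^ n * T ^ n * (ε ^ m * R ^ m) * (ρ ^ m * (1 / n !)) := by
        have := factorial_div_factorial_add_le n m
        have : 0 ≤ ρ := hT.trans hTρ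
        gcongr
    _ = C * M * R ^ n / n ! * (R * ρ * ε) ^ m * T ^ n := by
        rw [mul_pow, mul_pow]; ring

section ProductBounds

variable {F G : ℤ → ℂ → ℂ} {η C ε M R ρ : ℝ} {k i : ℤ} {t : ℂ}

lemma norm_mul_le_tailMajorant (hF : NegCoeffBound C ε η F) (hG : PosCoeffBound M R η G)
    (hC : 0 ≤ C) (hM : 0 ≤ M) (hR : 0 ≤ R) (hε : 0 ≤ ε) (hρη : ρ ≤ η)
    (hk : 0 ≤ k) (hi : i < 0) (ht : ‖t‖ ≤ ρ) :
    ‖F i t‖ * ‖G (k - i) t‖ ≤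
      tailMajorant (C * M * R ^ k.toNat / k.toNat !) (R * ρ * ε) i * ‖t‖ ^ k.toNat := by
  have htη : t ∈ closedBall (0 : ℂ) η := mem_closedBall_zero_iff.mpr (ht.trans hρη)
  have hFi := hF i hi t htη
  rw [show -i = ((-i).toNat : ℤ) by omega, zpow_natCast] at hFi
  have hGi := hG (k - i) (by omega) t htη
  rw [show (k - i).toNat = k.toNat + (-i).toNat by omega] at hGi
  rw [tailMajorant, if_pos hi]
  exact mul_le_of_neg_pos_bounds hC hM hR hε (norm_nonneg t) ht hFi hGi (norm_nonneg _)

lemma norm_mul_le_binomialMajorant (hF : PosCoeffBound M R η F) (hG : PosCoeffBound M R η G)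
    (hi₀ : 0 ≤ i) (hik : i ≤ k) (ht : t ∈ closedBall (0 : ℂ) η) :
    ‖F i t‖ * ‖G (k - i) t‖ ≤
      binomialMajorant (M ^ 2 * R ^ k.toNat / k.toNat !) k.toNat i * ‖t‖ ^ k.toNat := by
  obtain ⟨a, rfl⟩ := Int.eq_ofNat_of_zero_le hi₀
  obtain ⟨b, rfl⟩ : ∃ b : ℕ, k = a + b := ⟨(k - a).toNat, by omega⟩
  have hFa := hF a hi₀ t ht
  have hGb := hG (a + b - a) (by omega) t ht
  simp only [add_sub_cancel_left, Int.toNat_natCast] at hFa hGb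
  rw [add_sub_cancel_left, binomialMajorant, if_pos hi₀, ← Nat.cast_add, Int.toNat_natCast,
    Int.toNat_natCast]
  have hchoose : (a + b).choose a * (a ! * b !) = (a + b)! := by
    rw [add_comm a b, mul_comm (a !), ← mul_assoc]
    exact Nat.add_choose_mul_factorial_mul_factorial b a
  have hchoose₀ : ((a + b).choose a : ℝ) ≠ 0 := Nat.cast_ne_zero.mpr (Nat.choose_pos (by omega)).ne'
  calc ‖F a t‖ * ‖G b t‖ ≤ M * R ^ a / a ! * ‖t‖ ^ a * (M * R ^ b / b ! * ‖t‖ ^ b) :=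
        mul_le_mul hFa hGb (norm_nonneg _) ((norm_nonneg _).trans hFa)
    _ = M ^ 2 * R ^ (a + b) / (a + b)! * ((a + b).choose a) * ‖t‖ ^ (a + b) := by
        rw [← hchoose]; push_cast; field_simp; ring

lemma norm_mul_le_majorant (hFneg : NegCoeffBound C ε η F) (hFpos : PosCoeffBound M R η F)
    (hGneg : NegCoeffBound C ε η G) (hGpos : PosCoeffBound M R η G)
    (hC : 0 ≤ C) (hM : 0 ≤ M) (hR : 0 ≤ R) (hε : 0 ≤ ε) (hρη : ρ ≤ η)
    (hk : 0 ≤ k) (i : ℤ) (ht : ‖t‖ ≤ ρ) :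
    ‖F i t * G (k - i) t‖ ≤
      (binomialMajorant (M ^ 2 * R ^ k.toNat / k.toNat !) k.toNat i
        + tailMajorant (C * M * R ^ k.toNat / k.toNat !) (R * ρ * ε) i
        + tailMajorant (C * M * R ^ k.toNat / k.toNat !) (R * ρ * ε) (k - i)) * ‖t‖ ^ k.toNat := by
  have hρ : 0 ≤ ρ := (norm_nonneg t).trans ht
  have hbin := binomialMajorant_nonneg (c := M ^ 2 * R ^ k.toNat / k.toNat !) (by positivity)
    k.toNat
  have htail := tailMajorant_nonneg (K := C * M * R ^ k.toNat / k.toNat !) (q := R * ρ * ε)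
    (by positivity) (by positivity)
  rw [norm_mul]
  rcases lt_or_ge i 0 with hi | hi₀
  · refine (norm_mul_le_tailMajorant hFneg hGpos hC hM hR hε hρη hk hi ht).trans ?_
    gcongr
    linarith [hbin i, htail (k - i)]
  rcases le_or_gt i k with hik | hki
  · refine (norm_mul_le_binomialMajorant hFpos hGpos hi₀ hik
      (mem_closedBall_zero_iff.mpr (ht.trans hρη))).trans ?_
    gcongr
    linarith [htail i, htail (k - i)]
  · have hswap := norm_mul_le_tailMajorant hGneg hFpos hC hM hR hε hρη hk (by omega : k - i < 0) ht
    rw [sub_sub_cancel, mul_comm] at hswap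
    refine hswap.trans ?_
    gcongr
    linarith [hbin i, htail i]

end ProductBounds

lemma majorant_sum_le {C M R q : ℝ} (hC : 0 ≤ C) (hM : 0 ≤ M) (hR : 0 ≤ R) (hq₀ : 0 ≤ q)
    (hq₁ : q < 1) (n : ℕ) :
    M ^ 2 * R ^ n / n ! * 2 ^ n + C * M * R ^ n / n ! * q / (1 - q)
        + C * M * R ^ n / n ! * q / (1 - q) ≤
      (M ^ 2 + 2 * C * M * q / (1 - q)) * (2 * R) ^ n / n ! := by
  have h1q : 0 < 1 - q := by linarith
  have hRn : R ^ n ≤ (2 * R) ^ n := pow_le_pow_left₀ hR (by linarith) n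
  calc M ^ 2 * R ^ n / n ! * 2 ^ n + C * M * R ^ n / n ! * q / (1 - q)
          + C * M * R ^ n / n ! * q / (1 - q)
        = M ^ 2 * (2 * R) ^ n / n ! + 2 * C * M * q / (1 - q) * (R ^ n / n !) := by
          rw [mul_pow]; ring
    _ ≤ M ^ 2 * (2 * R) ^ n / n ! + 2 * C * M * q / (1 - q) * ((2 * R) ^ n / n !) := by
          gcongr
    _ = (M ^ 2 + 2 * C * M * q / (1 - q)) * (2 * R) ^ n / n ! := by ring

theorem stmt_9_general (f g : ℤ → ℂ → ℂ) (η C ε M R : ℝ)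
    (hη : 0 < η) (hC : 0 < C) (hε : 0 < ε) (hM : 0 < M) (hR : 0 < R)
    (hfneg : ∀ j : ℤ, j < 0 → ∀ t ∈ closedBall (0 : ℂ) η,
      ‖f j t‖ ≤ C * ε ^ (-j) * ((-j).toNat !))
    (hgneg : ∀ j : ℤ, j < 0 → ∀ t ∈ closedBall (0 : ℂ) η,
      ‖g j t‖ ≤ C * ε ^ (-j) * ((-j).toNat !))
    (hfpos : ∀ j : ℤ, 0 ≤ j → ∀ t ∈ closedBall (0 : ℂ) η,
      ‖f j t‖ ≤ M * R ^ j.toNat / (j.toNat !) * ‖t‖ ^ j.toNat)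
    (hgpos : ∀ j : ℤ, 0 ≤ j → ∀ t ∈ closedBall (0 : ℂ) η,
      ‖g j t‖ ≤ M * R ^ j.toNat / (j.toNat !) * ‖t‖ ^ j.toNat) :
    ∃ h : ℤ → ℂ → ℂ, ∀ k : ℤ, 0 ≤ k →
      TendstoUniformlyOn
        (fun (s : Finset ℤ) (t : ℂ) => ∑ i ∈ s, f i t * g (k - i) t)
        (h k) atTop (closedBall 0 (min η (1 / (2 * R * ε)))) ∧
      ∀ t ∈ closedBall (0 : ℂ) (min η (1 / (2 * R * ε))),
        ‖h k t‖ ≤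
          (M ^ 2 + 2 * C * M * (R * min η (1 / (2 * R * ε)) * ε) /
              (1 - R * min η (1 / (2 * R * ε)) * ε)) *
            (2 * R) ^ k.toNat / (k.toNat !) * ‖t‖ ^ k.toNat := by
  set ρ := min η (1 / (2 * R * ε))
  have hρ : 0 ≤ ρ := le_min hη.le (by positivity)
  have hq₀ : 0 ≤ R * ρ * ε := by positivity
  have hq₁ : R * ρ * ε < 1 :=
    calc R * ρ * ε ≤ R * (1 / (2 * R * ε)) * ε := by gcongr; exact min_le_right _ _
      _ = 1 / 2 := by field_simp
      _ < 1 := by norm_num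
  refine ⟨fun k t => ∑' i, f i t * g (k - i) t, fun k hk => ?_⟩
  set n := k.toNat
  set u : ℤ → ℝ := fun i => binomialMajorant (M ^ 2 * R ^ n / n !) n i
    + tailMajorant (C * M * R ^ n / n !) (R * ρ * ε) i
    + tailMajorant (C * M * R ^ n / n !) (R * ρ * ε) (k - i)
  have hu : HasSum u (M ^ 2 * R ^ n / n ! * 2 ^ n + C * M * R ^ n / n ! * (R * ρ * ε) /
      (1 - R * ρ * ε) + C * M * R ^ n / n ! * (R * ρ * ε) / (1 - R * ρ * ε)) :=
    ((hasSum_binomialMajorant _ n).add (hasSum_tailMajorant hq₀ hq₁)).add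
      (hasSum_tailMajorant_sub hq₀ hq₁ k)
  have hu₀ (i : ℤ) : 0 ≤ u i := by
    have := binomialMajorant_nonneg (c := M ^ 2 * R ^ n / n !) (by positivity) n i
    have := tailMajorant_nonneg (K := C * M * R ^ n / n !) (by positivity) hq₀ i
    have := tailMajorant_nonneg (K := C * M * R ^ n / n !) (by positivity) hq₀ (k - i)
    positivity
  have hterm (i : ℤ) (t : ℂ) (ht : t ∈ closedBall 0 ρ) : ‖f i t * g (k - i) t‖ ≤ u i * ‖t‖ ^ n :=
    norm_mul_le_majorant hfneg hfpos hgneg hgpos hC.le hM.le hR.le hε.le (min_le_left _ _) hk i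
      (mem_closedBall_zero_iff.mp ht)
  refine ⟨tendstoUniformlyOn_tsum (hu.summable.mul_right (ρ ^ n)) fun i t ht => ?_, fun t ht => ?_⟩
  · refine (hterm i t ht).trans ?_
    have := hu₀ i
    gcongr
    exact mem_closedBall_zero_iff.mp ht
  · refine (tsum_of_norm_bounded (hu.mul_right _) fun i => hterm i t ht).trans ?_
    gcongr
    exact majorant_sum_le hC.le hM.le hR.le hq₀ hq₁ n

/-- Nonnegative-index coefficients of the product of two order-0 symbols: under the same
hypotheses as for the negative part, for every `k ≥ 0` the series
`h_k = ∑_{i+j=k} f_i g_j` converges uniformly on `{|t| ≤ η̃}`, `η̃ = min(η, 1/(2Rε))`,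
and `|h_k(t)| ≤ (M² + 2CM·Rη̃ε/(1−Rη̃ε)) ((2R)^k/k!) |t|^k` for `|t| ≤ η̃`. -/
theorem stmt_9 (f g : ℤ → ℂ → ℂ) (η C ε M R : ℝ)
    (hη : 0 < η) (hC : 0 < C) (hε : 0 < ε) (hM : 0 < M) (hR : 0 < R)
    (hf : ∀ j : ℤ, DifferentiableOn ℂ (f j) (closedBall 0 η))
    (hg : ∀ j : ℤ, DifferentiableOn ℂ (g j) (closedBall 0 η))
    (hfneg : ∀ j : ℤ, j < 0 → ∀ t ∈ closedBall (0 : ℂ) η,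
      ‖f j t‖ ≤ C * ε ^ (-j) * ((-j).toNat !))
    (hgneg : ∀ j : ℤ, j < 0 → ∀ t ∈ closedBall (0 : ℂ) η,
      ‖g j t‖ ≤ C * ε ^ (-j) * ((-j).toNat !))
    (hfpos : ∀ j : ℤ, 0 ≤ j → ∀ t ∈ closedBall (0 : ℂ) η,
      ‖f j t‖ ≤ M * R ^ j.toNat / (j.toNat !) * ‖t‖ ^ j.toNat)
    (hgpos : ∀ j : ℤ, 0 ≤ j → ∀ t ∈ closedBall (0 : ℂ) η,
      ‖g j t‖ ≤ M * R ^ j.toNat / (j.toNat !) * ‖t‖ ^ j.toNat) :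
    ∃ h : ℤ → ℂ → ℂ, ∀ k : ℤ, 0 ≤ k →
      TendstoUniformlyOn
        (fun (s : Finset ℤ) (t : ℂ) => ∑ i ∈ s, f i t * g (k - i) t)
        (h k) atTop (closedBall 0 (min η (1 / (2 * R * ε)))) ∧
      ∀ t ∈ closedBall (0 : ℂ) (min η (1 / (2 * R * ε))),
        ‖h k t‖ ≤
          (M ^ 2 + 2 * C * M * (R * min η (1 / (2 * R * ε)) * ε) /
              (1 - R * min η (1 / (2 * R * ε)) * ε)) *
            (2 * R) ^ k.toNat / (k.toNat !) * ‖t‖ ^ k.toNat :=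
  stmt_9_general f g η C ε M R hη hC hε hM hR hfneg hgneg hfpos hgpos
end

section
/- Let a_{n,j} ∈ ℂ for j ≤ 0, n ≥ 0 satisfy |a_{n,j}| ≤ C ε^{-j} (-j)! R^n for constants C, ε, R > 0. Define for each k ∈ ℤ the function f_k(t) = ∑_{n ≥ max(k,0)} a_{n, k-n} t^n / n!. Then for any η < 1/(εR): (i) each f_k is holomorphic on {|t| < η}, (ii) for k < 0 and |t| ≤ η, |f_k(t)| ≤ (C/(1−ηεR)) · (ε/(1−ηεR))^{-k} · (-k)!, and (iii) for k ≥ 0 and |t| ≤ η, |f_k(t)| ≤ (C/(1−ηεR)) · (R^k/k!) · |t|^k. -/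
open Nat Metric

/-- Forward direction of the Laplace transform on symbols: if `|a_{n,j}| ≤ C ε^{-j}(-j)! R^n`
for `j ≤ 0`, `n ≥ 0`, then for `η < 1/(εR)` the functions
`f_k(t) = ∑_{n ≥ max(k,0)} a_{n,k-n} t^n/n!` are holomorphic on `{|t| < η}` and satisfy
`|f_k(t)| ≤ (C/(1−ηεR)) (ε/(1−ηεR))^{-k} (-k)!` for `k < 0` and
`|f_k(t)| ≤ (C/(1−ηεR)) (R^k/k!) |t|^k` for `k ≥ 0`, on `{|t| ≤ η}`. -/
theorem stmt_12 (a : ℕ → ℤ → ℂ) (C ε R η : ℝ)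
    (hC : 0 < C) (hε : 0 < ε) (hR : 0 < R) (hη : 0 < η) (hηsmall : η < 1 / (ε * R))
    (ha : ∀ (n : ℕ) (j : ℤ), j ≤ 0 →
      ‖a n j‖ ≤ C * ε ^ (-j) * ((-j).toNat !) * R ^ n) :
    ∃ f : ℤ → ℂ → ℂ,
      (∀ (k : ℤ) (t : ℂ), t ∈ closedBall (0 : ℂ) η →
        HasSum (fun n : ℕ => if k ≤ (n : ℤ) then a n (k - n) * t ^ n / (n ! : ℂ) else 0)
          (f k t)) ∧
      (∀ k : ℤ, DifferentiableOn ℂ (f k) (ball 0 η)) ∧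
      (∀ k : ℤ, k < 0 → ∀ t ∈ closedBall (0 : ℂ) η,
        ‖f k t‖ ≤
          C / (1 - η * ε * R) * (ε / (1 - η * ε * R)) ^ (-k) * ((-k).toNat !)) ∧
      (∀ k : ℤ, 0 ≤ k → ∀ t ∈ closedBall (0 : ℂ) η,
        ‖f k t‖ ≤
          C / (1 - η * ε * R) * (R ^ k.toNat / (k.toNat !)) * ‖t‖ ^ k.toNat) := by
  have hεR : 0 < ε * R := by positivity
  have hα1 : η * ε * R < 1 := by
    have := (lt_div_iff₀ hεR).mp hηsmall
    nlinarith
  have hα0 : 0 < η * ε * R := by positivity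
  set α := η * ε * R with hαdef
  have h1α : 0 < 1 - α := by linarith
  have hαnorm : ‖α‖ < 1 := by rw [Real.norm_eq_abs, abs_of_pos hα0]; exact hα1
  -- termwise bound at radius r
  have hterm : ∀ (k : ℤ) (n : ℕ) (t : ℂ) (r : ℝ), ‖t‖ ≤ r →
      ‖(if k ≤ (n:ℤ) then a n (k - n) * t ^ n / (n ! : ℂ) else 0)‖ ≤
      (if k ≤ (n:ℤ) then C * ε ^ ((-(k - (n:ℤ))).toNat) * (((-(k - (n:ℤ))).toNat)! : ℝ)
        * R ^ n * r ^ n / (n ! : ℝ) else 0) := by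
    intro k n t r ht
    split_ifs with h
    · have h1 := ha n (k - n) (by omega)
      have hzp : ε ^ (-(k - (n:ℤ))) = ε ^ ((-(k - (n:ℤ))).toNat) := by
        rw [← zpow_natCast ε ((-(k - (n:ℤ))).toNat), Int.toNat_of_nonneg (by omega)]
      rw [hzp] at h1
      have habs : ‖a n (k - ↑n) * t ^ n / (n ! : ℂ)‖
          = ‖a n (k - ↑n)‖ * ‖t‖ ^ n / (n ! : ℝ) := by
        simp [map_div₀, map_mul, map_pow, Complex.norm_natCast]
      rw [habs]
      have h0t : (0:ℝ) ≤ ‖t‖ := norm_nonneg _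
      gcongr
    · simp
  -- exact sum of the majorant for negative k
  have hnegHasSum : ∀ k : ℤ, k < 0 →
      HasSum (fun n : ℕ => (if k ≤ (n:ℤ) then C * ε ^ ((-(k - (n:ℤ))).toNat)
          * (((-(k - (n:ℤ))).toNat)! : ℝ) * R ^ n * η ^ n / (n ! : ℝ) else 0))
        (C * ε ^ (-k).toNat * (((-k).toNat)! : ℝ) * (1 / (1-α)^((-k).toNat + 1))) := by
    intro k hk
    set m := (-k).toNat with hm
    have hEq : ∀ n : ℕ, (if k ≤ (n:ℤ) then C * ε ^ ((-(k - (n:ℤ))).toNat)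
          * (((-(k - (n:ℤ))).toNat)! : ℝ) * R ^ n * η ^ n / (n ! : ℝ) else 0)
        = (C * ε ^ m * (m ! : ℝ)) * (((n + m).choose m : ℝ) * α ^ n) := by
      intro n
      rw [if_pos (by omega)]
      have hN : (-(k - (n:ℤ))).toNat = n + m := by omega
      rw [hN]
      have hfac : ((n+m)! : ℝ) = ((n+m).choose m : ℝ) * (m ! : ℝ) * (n ! : ℝ) := by
        have h := Nat.choose_mul_factorial_mul_factorial (Nat.le_add_left m n)
        rw [Nat.add_sub_cancel] at h
        exact_mod_cast h.symm
      have hn0 : (n ! : ℝ) ≠ 0 := by positivity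
      rw [hfac, pow_add, hαdef, mul_pow, mul_pow]
      field_simp
    rw [funext hEq]
    exact (hasSum_choose_mul_geometric_of_norm_lt_one m hαnorm).mul_left _
  -- shifted geometric majorant for nonnegative k
  have hposHasSum : ∀ (m : ℕ) (r : ℝ),
      HasSum (fun n : ℕ => if m ≤ n then (C * R^m * r^m / (m ! : ℝ)) * α^(n-m) else 0)
        ((C * R^m * r^m / (m ! : ℝ)) * (1-α)⁻¹) := by
    intro m r
    set c := C * R^m * r^m / (m ! : ℝ) with hc
    have h1 : HasSum (fun e : ℕ => c * α ^ e) (c * (1-α)⁻¹) :=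
      (hasSum_geometric_of_lt_one hα0.le hα1).mul_left c
    have h2 := Function.Injective.hasSum_iff
      (f := fun n : ℕ => if m ≤ n then c * α^(n-m) else 0) (g := fun e : ℕ => e + m)
      (a := c * (1-α)⁻¹) (add_left_injective m) ?_
    · rw [← h2]
      convert h1 using 1
      funext e
      simp [Function.comp]
    · intro x hx
      have hxm : x < m := by
        by_contra hcon
        push_neg at hcon
        exact hx ⟨x - m, Nat.sub_add_cancel hcon⟩
      exact if_neg (by omega)
  -- comparison of the majorants for nonnegative k
  have hkey : ∀ (m e : ℕ) (r : ℝ), 0 ≤ r → r ≤ η →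
      C * ε ^ e * (e ! : ℝ) * R ^ (m+e) * r ^ (m+e) / ((m+e)! : ℝ)
        ≤ (C * R^m * r^m / (m ! : ℝ)) * α^e := by
    intro m e r hr0 hrη
    have hm0 : (0:ℝ) < (m ! : ℝ) := by exact_mod_cast Nat.factorial_pos m
    have he0 : (0:ℝ) < (e ! : ℝ) := by exact_mod_cast Nat.factorial_pos e
    have hfle : (m ! : ℝ) * (e ! : ℝ) ≤ ((m+e)! : ℝ) := by
      exact_mod_cast Nat.le_of_dvd (Nat.factorial_pos _)
        (Nat.factorial_mul_factorial_dvd_factorial_add m e)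
    calc C * ε ^ e * (e ! : ℝ) * R ^ (m+e) * r ^ (m+e) / ((m+e)! : ℝ)
        ≤ C * ε ^ e * (e ! : ℝ) * R ^ (m+e) * r ^ (m+e) / ((m ! : ℝ) * (e ! : ℝ)) := by
          gcongr
      _ = (C * R^m * r^m / (m ! : ℝ)) * (ε*R*r)^e := by
          rw [pow_add, pow_add, mul_pow, mul_pow]
          field_simp
      _ ≤ (C * R^m * r^m / (m ! : ℝ)) * α^e := by
          gcongr
          rw [hαdef]; nlinarith
  have hUW : ∀ (k : ℤ), 0 ≤ k → ∀ (n : ℕ) (r : ℝ), 0 ≤ r → r ≤ η →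
      (if k ≤ (n:ℤ) then C * ε ^ ((-(k - (n:ℤ))).toNat) * (((-(k - (n:ℤ))).toNat)! : ℝ)
        * R ^ n * r ^ n / (n ! : ℝ) else 0)
      ≤ (if k.toNat ≤ n then (C * R^k.toNat * r^k.toNat / ((k.toNat)! : ℝ)) * α^(n-k.toNat) else 0) := by
    intro k hk n r hr0 hrη
    by_cases h : k ≤ (n:ℤ)
    · rw [if_pos h, if_pos (by omega)]
      set m := k.toNat with hm
      have hN : (-(k - (n:ℤ))).toNat = n - m := by omega
      have hn : n = m + (n - m) := by omega
      rw [hN]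
      calc C * ε ^ (n-m) * (((n-m))! : ℝ) * R ^ n * r ^ n / (n ! : ℝ)
          = C * ε ^ (n-m) * (((n-m))! : ℝ) * R ^ (m + (n-m)) * r ^ (m + (n-m)) / (((m + (n-m)))! : ℝ) := by
            rw [← hn]
        _ ≤ (C * R^m * r^m / (m ! : ℝ)) * α^(n-m) := hkey m (n-m) r hr0 hrη
    · rw [if_neg h, if_neg (by omega)]
  -- summability of the norms
  have hsummN : ∀ (k : ℤ) (t : ℂ), ‖t‖ ≤ η →
      Summable (fun n : ℕ => ‖(if k ≤ (n:ℤ) then a n (k - n) * t ^ n / (n ! : ℂ) else 0)‖) := by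
    intro k t ht
    rcases lt_or_ge k 0 with hk | hk
    · exact Summable.of_nonneg_of_le (fun n => norm_nonneg _) (fun n => hterm k n t η ht)
        (hnegHasSum k hk).summable
    · exact Summable.of_nonneg_of_le (fun n => norm_nonneg _)
        (fun n => (hterm k n t η ht).trans (hUW k hk n η hη.le le_rfl))
        (hposHasSum k.toNat η).summable
  refine ⟨fun k t => ∑' n : ℕ, (if k ≤ (n:ℤ) then a n (k - n) * t ^ n / (n ! : ℂ) else 0),
    ?_, ?_, ?_, ?_⟩
  · intro k t ht
    rw [mem_closedBall_zero_iff] at ht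
    exact ((hsummN k t ht).of_norm).hasSum
  · intro k
    apply Complex.differentiableOn_tsum_of_summable_norm
      (u := fun n : ℕ => (if k ≤ (n:ℤ) then C * ε ^ ((-(k - (n:ℤ))).toNat)
        * (((-(k - (n:ℤ))).toNat)! : ℝ) * R ^ n * η ^ n / (n ! : ℝ) else 0))
    · rcases lt_or_ge k 0 with hk | hk
      · exact (hnegHasSum k hk).summable
      · apply Summable.of_nonneg_of_le _ (fun n => hUW k hk n η hη.le le_rfl)
          (hposHasSum k.toNat η).summable
        intro n
        split_ifs
        · positivity
        · exact le_rfl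
    · intro n
      split_ifs
      · exact (((differentiable_const _).mul (differentiable_pow n)).div_const _).differentiableOn
      · exact differentiableOn_const 0
    · exact isOpen_ball
    · intro n w hw
      rw [mem_ball_zero_iff] at hw
      exact hterm k n w η hw.le
  · intro k hk t ht
    rw [mem_closedBall_zero_iff] at ht
    set m := (-k).toNat with hm
    have hval : C / (1 - α) * (ε / (1 - α)) ^ (-k) * ((-k).toNat ! : ℝ)
        = C * ε ^ m * (m ! : ℝ) * (1 / (1-α)^(m + 1)) := by
      rw [show -k = ((m : ℕ) : ℤ) by omega, zpow_natCast, div_pow]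
      have : (1-α) ^ m ≠ 0 := by positivity
      field_simp
      simp only [Int.toNat_natCast]
      ring
    rw [hval]
    calc ‖∑' n : ℕ, (if k ≤ (n:ℤ) then a n (k - n) * t ^ n / (n ! : ℂ) else 0)‖
        ≤ ∑' n : ℕ, ‖(if k ≤ (n:ℤ) then a n (k - n) * t ^ n / (n ! : ℂ) else 0)‖ :=
          norm_tsum_le_tsum_norm (hsummN k t ht)
      _ ≤ ∑' n : ℕ, (if k ≤ (n:ℤ) then C * ε ^ ((-(k - (n:ℤ))).toNat)
            * (((-(k - (n:ℤ))).toNat)! : ℝ) * R ^ n * η ^ n / (n ! : ℝ) else 0) :=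
          Summable.tsum_le_tsum (fun n => hterm k n t η ht) (hsummN k t ht) (hnegHasSum k hk).summable
      _ = C * ε ^ m * (m ! : ℝ) * (1 / (1-α)^(m + 1)) := (hnegHasSum k hk).tsum_eq
  · intro k hk t ht
    rw [mem_closedBall_zero_iff] at ht
    set m := k.toNat with hm
    set T := ‖t‖ with hT
    have hT0 : 0 ≤ T := norm_nonneg _
    have hval : C / (1 - α) * (R ^ m / (m ! : ℝ)) * T ^ m
        = (C * R^m * T^m / (m ! : ℝ)) * (1-α)⁻¹ := by
      ring
    rw [hval]
    calc ‖∑' n : ℕ, (if k ≤ (n:ℤ) then a n (k - n) * t ^ n / (n ! : ℂ) else 0)‖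
        ≤ ∑' n : ℕ, ‖(if k ≤ (n:ℤ) then a n (k - n) * t ^ n / (n ! : ℂ) else 0)‖ :=
          norm_tsum_le_tsum_norm (hsummN k t ht)
      _ ≤ ∑' n : ℕ, (if m ≤ n then (C * R^m * T^m / (m ! : ℝ)) * α^(n-m) else 0) :=
          Summable.tsum_le_tsum (fun n => (hterm k n t T le_rfl).trans (hUW k hk n T hT0 ht))
            (hsummN k t ht) (hposHasSum m T).summable
      _ = (C * R^m * T^m / (m ! : ℝ)) * (1-α)⁻¹ := (hposHasSum m T).tsum_eq
end

section
/- Let K₀ ⊂ ℂ be compact and let f, g be holomorphic on ℂ \ K₀. Define (f * g)(z) = (1/(2πi)) ∮_γ f(z−w) g(w) dw, where γ is a counterclockwise circle containing K₀ and |z| is large enough that z + K₀ lies outside the disc bounded by γ. Then exchanging f and g changes f * g by a function that extends holomorphically to all of ℂ; consequently f * g = g * f as classes in H¹_c(ℂ; O) ≅ O(ℂ \ K)/O(ℂ). -/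
open Metric Complex MeasureTheory Set Filter intervalIntegral Topology

noncomputable section Stmt19Aux

namespace Stmt19

/-- Cauchy-type integral of `f` over the circle `|v| = R`, evaluated with kernel `(v-z)⁻¹`. -/
def cInt (f : ℂ → ℂ) (R : ℝ) (z : ℂ) : ℂ := ∮ v in C(0, R), (v - z)⁻¹ • f v

/-- The "entire part" of `f` (holomorphic outside `ball 0 s`). -/
def cplus (f : ℂ → ℂ) (s : ℝ) (z : ℂ) : ℂ :=
  (2 * Real.pi * Complex.I : ℂ)⁻¹ • cInt f (max s (‖z‖) + 1) z

lemma not_mem_of_norm_ge {K : Set ℂ} {s : ℝ} (hK : K ⊆ ball 0 s) {v : ℂ}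
    (hv : s ≤ ‖v‖) : v ∈ Kᶜ := by
  intro hvK
  have := hK hvK
  rw [mem_ball_zero_iff] at this
  linarith

lemma cInt_congr {K : Set ℂ} (hKo : IsOpen Kᶜ) {f : ℂ → ℂ} (hf : DifferentiableOn ℂ f Kᶜ)
    {s : ℝ} (hK : K ⊆ ball 0 s) {z : ℂ} {R₁ R₂ : ℝ}
    (hs : s < R₁) (hz : ‖z‖ < R₁) (h12 : R₁ ≤ R₂) (h0 : 0 < R₁) :
    cInt f R₂ z = cInt f R₁ z := by
  refine circleIntegral_eq_of_differentiable_on_annulus_off_countable h0 h12 countable_empty ?_ ?_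
  · intro v hv
    have hv1 : R₁ ≤ ‖v‖ := by
      have := hv.2
      rw [mem_ball_zero_iff, not_lt] at this
      exact this
    have hvz : v - z ≠ 0 := sub_ne_zero.2 (by rintro rfl; linarith)
    have hvK : v ∈ Kᶜ := not_mem_of_norm_ge hK (by linarith)
    exact (((continuousAt_id.sub continuousAt_const).inv₀ hvz).smul
      ((hf.continuousOn.continuousAt (hKo.mem_nhds hvK)))).continuousWithinAt
  · intro v hv
    have hv1 : R₁ ≤ ‖v‖ := by
      have := hv.1.2
      rw [mem_closedBall_zero_iff, not_le] at this
      linarith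
    have hvz : v - z ≠ 0 := sub_ne_zero.2 (by rintro rfl; linarith)
    have hvK : v ∈ Kᶜ := not_mem_of_norm_ge hK (by linarith)
    exact ((differentiableAt_id.sub_const z).inv hvz).smul
      (hf.differentiableAt (hKo.mem_nhds hvK))

lemma laurent {K : Set ℂ} (hKo : IsOpen Kᶜ) {f : ℂ → ℂ} (hf : DifferentiableOn ℂ f Kᶜ)
    {s : ℝ} (hs : 0 < s) (hK : K ⊆ ball 0 s) {u : ℂ} (hu : s < ‖u‖)
    {R : ℝ} (huR : ‖u‖ < R) :
    (2 * Real.pi * Complex.I : ℂ) • f u = cInt f R u - cInt f s u := by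
  have hsR : s < R := lt_trans hu huR
  have hfu : DifferentiableAt ℂ f u :=
    hf.differentiableAt (hKo.mem_nhds (not_mem_of_norm_ge hK hu.le))
  -- Step 1: annulus Cauchy-Goursat for `dslope f u`
  have step1 : (∮ v in C(0, R), dslope f u v) = ∮ v in C(0, s), dslope f u v := by
    refine circleIntegral_eq_of_differentiable_on_annulus_off_countable hs hsR.le
      (countable_singleton u) ?_ ?_
    · have hA : closedBall (0:ℂ) R \ ball 0 s ∈ 𝓝 u := by
        refine mem_nhds_iff.2 ⟨ball 0 R \ closedBall 0 s, ?_,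
          isOpen_ball.sdiff Metric.isClosed_closedBall, ?_, ?_⟩
        · exact diff_subset_diff ball_subset_closedBall ball_subset_closedBall
        · rw [mem_ball_zero_iff]; exact huR
        · rw [mem_closedBall_zero_iff, not_le]; exact hu
      refine (continuousOn_dslope hA).2 ⟨?_, hfu⟩
      refine hf.continuousOn.mono fun v hv => ?_
      have : s ≤ ‖v‖ := by
        have := hv.2; rw [mem_ball_zero_iff, not_lt] at this; exact this
      exact not_mem_of_norm_ge hK this
    · intro v hv
      have hvs : s < ‖v‖ := by
        have := hv.1.2; rw [mem_closedBall_zero_iff, not_le] at this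
        exact this
      have hvu : v ≠ u := fun h => hv.2 (by simp [h])
      exact (differentiableAt_dslope_of_ne hvu).2
        (hf.differentiableAt (hKo.mem_nhds (not_mem_of_norm_ge hK hvs.le)))
  -- Step 2: expand `dslope` on each circle
  have expand : ∀ ρ : ℝ, 0 < ρ → s ≤ ρ → ‖u‖ ≠ ρ →
      (∮ v in C(0, ρ), dslope f u v) =
        cInt f ρ u - (∮ v in C(0, ρ), (v - u)⁻¹) • f u := by
    intro ρ hρ hsρ hne
    have hsph : ∀ v ∈ sphere (0:ℂ) ρ, v ≠ u := by
      intro v hv h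
      rw [mem_sphere_zero_iff_norm] at hv
      exact hne (by rw [← h, hv])
    have hsphK : sphere (0:ℂ) ρ ⊆ Kᶜ := by
      intro v hv
      rw [mem_sphere_zero_iff_norm] at hv
      exact not_mem_of_norm_ge hK (by linarith)
    have hkercont : ContinuousOn (fun v : ℂ => (v - u)⁻¹) (sphere (0:ℂ) ρ) := by
      refine (continuousOn_id.sub continuousOn_const).inv₀ fun v hv => ?_
      exact sub_ne_zero.2 (hsph v hv)
    have hcont1 : ContinuousOn (fun v => (v - u)⁻¹ • f v) (sphere (0:ℂ) ρ) :=
      hkercont.smul (hf.continuousOn.mono hsphK)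
    have hcont2 : ContinuousOn (fun v => (v - u)⁻¹ • f u) (sphere (0:ℂ) ρ) :=
      hkercont.smul continuousOn_const
    calc (∮ v in C(0, ρ), dslope f u v)
        = ∮ v in C(0, ρ), ((v - u)⁻¹ • f v - (v - u)⁻¹ • f u) := by
          refine circleIntegral.integral_congr hρ.le fun v hv => ?_
          rw [dslope_of_ne f (hsph v hv), slope_def_module, smul_sub]
      _ = (∮ v in C(0, ρ), (v - u)⁻¹ • f v) - ∮ v in C(0, ρ), (v - u)⁻¹ • f u :=
          circleIntegral.integral_sub (hcont1.circleIntegrable hρ.le)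
            (hcont2.circleIntegrable hρ.le)
      _ = cInt f ρ u - (∮ v in C(0, ρ), (v - u)⁻¹) • f u := by
          rw [cInt, circleIntegral.integral_smul_const]
  have eR := expand R (lt_trans hs hsR) hsR.le (ne_of_lt huR)
  have es := expand s hs le_rfl (ne_of_gt hu)
  have hR2pi : (∮ v in C(0, R), (v - u)⁻¹) = 2 * Real.pi * Complex.I := by
    refine circleIntegral.integral_sub_inv_of_mem_ball ?_
    rw [mem_ball_zero_iff]; exact huR
  have hs0 : (∮ v in C(0, s), (v - u)⁻¹) = 0 := by
    refine circleIntegral_eq_zero_of_differentiable_on_off_countable hs.le countable_empty ?_ ?_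
    · refine (continuousOn_id.sub continuousOn_const).inv₀ fun v hv => ?_
      rw [mem_closedBall_zero_iff] at hv
      exact sub_ne_zero.2 fun h => by rw [show v = u from h] at hv; linarith
    · intro v hv
      have hv' : ‖v‖ < s := by
        have := hv.1; rw [mem_ball_zero_iff] at this; exact this
      exact (differentiableAt_id.sub_const u).inv (sub_ne_zero.2 fun h => by rw [show v = u from h] at hv'; linarith)
  rw [eR, es, hR2pi, hs0, zero_smul, sub_zero] at step1
  have := step1
  simp only [smul_eq_mul] at this ⊢
  linear_combination -this

lemma two_pi_I_ne : (2 * Real.pi * Complex.I : ℂ) ≠ 0 := by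
  simp [Real.pi_ne_zero, Complex.I_ne_zero, Complex.ofReal_ne_zero]

lemma fminus_eq {K : Set ℂ} (hKo : IsOpen Kᶜ) {f : ℂ → ℂ} (hf : DifferentiableOn ℂ f Kᶜ)
    {s : ℝ} (hs : 0 < s) (hK : K ⊆ ball 0 s) {u : ℂ} (hu : s < ‖u‖) :
    f u - cplus f s u = -((2 * Real.pi * Complex.I : ℂ)⁻¹ • cInt f s u) := by
  have hR : ‖u‖ < max s (‖u‖) + 1 := by
    have := le_max_right s (‖u‖); linarith
  have h := laurent hKo hf hs hK hu hR
  have h' : f u = (2 * Real.pi * Complex.I : ℂ)⁻¹ *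
      (cInt f (max s (‖u‖) + 1) u - cInt f s u) := by
    rw [← h, smul_eq_mul, inv_mul_cancel_left₀ two_pi_I_ne]
  rw [cplus, smul_eq_mul, smul_eq_mul, h']
  ring

lemma cplus_diff {K : Set ℂ} (hKo : IsOpen Kᶜ) {f : ℂ → ℂ} (hf : DifferentiableOn ℂ f Kᶜ)
    {s : ℝ} (hs : 0 < s) (hK : K ⊆ ball 0 s) : Differentiable ℂ (cplus f s) := by
  intro z₀
  set R : ℝ := max s (‖z₀‖) + 2 with hRdef
  have hmaxs := le_max_left s (‖z₀‖)
  have hmaxz := le_max_right s (‖z₀‖)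
  have hsR : s < R := by rw [hRdef]; linarith
  have hz₀R : ‖z₀‖ < R := by rw [hRdef]; linarith
  have hR0 : 0 < R := lt_trans hs hsR
  set Rn : NNReal := ⟨R, hR0.le⟩ with hRn
  have hcoe : (Rn : ℝ) = R := rfl
  have hint : CircleIntegrable f 0 R := by
    refine (hf.continuousOn.mono ?_).circleIntegrable hR0.le
    intro v hv
    rw [mem_sphere_zero_iff_norm] at hv
    exact not_mem_of_norm_ge hK (by linarith)
  have hps := hasFPowerSeriesOn_cauchy_integral (R := Rn)
    (by rw [hcoe]; exact hint) (by rw [← NNReal.coe_pos, hcoe]; exact hR0)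
  have hdiff : DifferentiableOn ℂ
      (fun w => (2 * Real.pi * Complex.I : ℂ)⁻¹ • ∮ v in C(0, R), (v - w)⁻¹ • f v)
      (ball (0:ℂ) R) := by
    have := hps.differentiableOn
    rwa [Metric.emetric_ball_nnreal, hcoe] at this
  have hAt : DifferentiableAt ℂ
      (fun w => (2 * Real.pi * Complex.I : ℂ)⁻¹ • ∮ v in C(0, R), (v - w)⁻¹ • f v) z₀ := by
    refine hdiff.differentiableAt (isOpen_ball.mem_nhds ?_)
    rw [mem_ball_zero_iff]; exact hz₀R
  refine hAt.congr_of_eventuallyEq ?_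
  filter_upwards [Metric.ball_mem_nhds z₀ one_pos] with z hz
  have hzz : ‖z‖ < ‖z₀‖ + 1 := by
    have h1 : dist z z₀ < 1 := hz
    have h2 : ‖z - z₀‖ < 1 := by rwa [Complex.dist_eq] at h1
    have h3 : ‖z‖ ≤ ‖z₀‖ + ‖z - z₀‖ := by
      calc ‖z‖ = ‖z₀ + (z - z₀)‖ := by ring_nf
        _ ≤ _ := norm_add_le _ _
    linarith
  have hmz := le_max_right s (‖z‖)
  have hms := le_max_left s (‖z‖)
  have h1 : ‖z‖ < max s (‖z‖) + 1 := by linarith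
  have h2 : s < max s (‖z‖) + 1 := by linarith
  have hle : max s (‖z‖) + 1 ≤ R := by
    rw [hRdef]
    rcases max_cases s (‖z‖) with ⟨hc, _⟩ | ⟨hc, _⟩ <;> rw [hc] <;> linarith
  rw [cplus]
  congr 1
  exact (cInt_congr hKo hf hK h2 h1 hle (by positivity)).symm

lemma diff_conv {φ G : ℂ → ℂ} (hφ : Differentiable ℂ φ) {s : ℝ} (hs : 0 < s)
    (hG : ContinuousOn G (sphere 0 s)) :
    Differentiable ℂ (fun z => ∮ w in C(0, s), φ (z - w) * G w) := by
  have hderiv : Differentiable ℂ (deriv φ) := by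
    have h : AnalyticOnNhd ℂ φ univ := fun x _ => hφ.analyticAt x
    exact fun x => (h.deriv x (mem_univ x)).differentiableAt
  have hGm : Continuous fun θ : ℝ => G (circleMap 0 s θ) :=
    hG.comp_continuous (continuous_circleMap 0 s) fun θ => circleMap_mem_sphere 0 hs.le θ
  have hcont_dm : Continuous fun θ : ℝ => deriv (circleMap 0 s) θ := by
    simp only [deriv_circleMap]; exact (continuous_circleMap 0 s).mul continuous_const
  set μ : Measure ℝ := volume.restrict (Ioc (0:ℝ) (2*Real.pi)) with hμ
  set F : ℂ → ℝ → ℂ := fun z θ =>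
    (deriv (circleMap 0 s) θ * G (circleMap 0 s θ)) * φ (z - circleMap 0 s θ) with hFdef
  set F' : ℂ → ℝ → ℂ := fun z θ =>
    (deriv (circleMap 0 s) θ * G (circleMap 0 s θ)) * deriv φ (z - circleMap 0 s θ) with hF'def
  have h2π : (0:ℝ) ≤ 2*Real.pi := by positivity
  have key : ∀ z, (∮ w in C(0, s), φ (z - w) * G w) = ∫ θ, F z θ ∂μ := by
    intro z
    rw [circleIntegral, intervalIntegral.integral_of_le h2π]
    refine integral_congr_ae (Eventually.of_forall fun θ => ?_)
    simp only [hFdef, smul_eq_mul]; ring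
  intro z₀
  have hFc : ∀ z : ℂ, Continuous (F z) := fun z =>
    (hcont_dm.mul hGm).mul (hφ.continuous.comp (continuous_const.sub (continuous_circleMap 0 s)))
  have hF'c : Continuous (F' z₀) :=
    (hcont_dm.mul hGm).mul (hderiv.continuous.comp (continuous_const.sub (continuous_circleMap 0 s)))
  obtain ⟨C₁, hC₁⟩ := (isCompact_closedBall (0:ℂ)
    (‖z₀‖ + 1 + s)).exists_bound_of_continuousOn hderiv.continuous.continuousOn
  obtain ⟨C₂, hC₂⟩ := (isCompact_Icc (a := (0:ℝ))
    (b := 2*Real.pi)).exists_bound_of_continuousOn (hcont_dm.mul hGm).continuousOn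
  have hint : Integrable (F z₀) μ := by rw [hμ]; exact (hFc z₀).integrableOn_Ioc
  have hint' : AEStronglyMeasurable (F' z₀) μ := hF'c.aestronglyMeasurable
  have hbd : ∀ᵐ θ ∂μ, ∀ x ∈ ball z₀ 1, ‖F' x θ‖ ≤ max C₂ 0 * max C₁ 0 := by
    rw [hμ]
    filter_upwards [ae_restrict_mem measurableSet_Ioc] with θ hθ x hx
    have hms : ‖circleMap 0 s θ‖ = s := by
      rw [norm_circleMap_zero, abs_of_pos hs]
    have hx1 : ‖x - z₀‖ < 1 := by
      have := mem_ball_iff_norm.1 hx; exact this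
    have hax : ‖x‖ ≤ ‖z₀‖ + ‖x - z₀‖ := by
      calc ‖x‖ = ‖z₀ + (x - z₀)‖ := by ring_nf
        _ ≤ _ := norm_add_le _ _
    have hxm : x - circleMap 0 s θ ∈ closedBall (0:ℂ) (‖z₀‖ + 1 + s) := by
      rw [mem_closedBall_zero_iff]
      calc ‖x - circleMap 0 s θ‖ ≤ ‖x‖ + ‖circleMap 0 s θ‖ := norm_sub_le _ _
        _ ≤ (‖z₀‖ + 1) + s := by
            rw [hms]
            have : ‖x‖ ≤ ‖z₀‖ + 1 := by linarith
            linarith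
        _ = ‖z₀‖ + 1 + s := by ring
    have h1 : ‖deriv φ (x - circleMap 0 s θ)‖ ≤ max C₁ 0 :=
      le_trans (hC₁ _ hxm) (le_max_left _ _)
    have h2 : ‖deriv (circleMap 0 s) θ * G (circleMap 0 s θ)‖ ≤ max C₂ 0 :=
      le_trans (hC₂ θ (mem_Icc_of_Ioc hθ)) (le_max_left _ _)
    calc ‖F' x θ‖
        = ‖deriv (circleMap 0 s) θ * G (circleMap 0 s θ)‖ * ‖deriv φ (x - circleMap 0 s θ)‖ := by
          rw [hF'def]; exact norm_mul _ _
      _ ≤ max C₂ 0 * max C₁ 0 :=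
          mul_le_mul h2 h1 (norm_nonneg _) (le_max_right _ _)
  have hbint : Integrable (fun _ : ℝ => max C₂ 0 * max C₁ 0) μ := by
    rw [hμ]; exact continuous_const.integrableOn_Ioc
  have hdiffF : ∀ᵐ θ ∂μ, ∀ x ∈ ball z₀ 1, HasDerivAt (F · θ) (F' x θ) x := by
    refine Eventually.of_forall fun θ x _ => ?_
    have h1 : HasDerivAt (fun x : ℂ => x - circleMap 0 s θ) 1 x := (hasDerivAt_id x).sub_const _
    have h2 : HasDerivAt (fun x : ℂ => φ (x - circleMap 0 s θ))
        (deriv φ (x - circleMap 0 s θ)) x := by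
      simpa [Function.comp_def] using HasDerivAt.comp x (hφ _).hasDerivAt h1
    have h3 := h2.const_mul (deriv (circleMap 0 s) θ * G (circleMap 0 s θ))
    simpa [hFdef, hF'def] using h3
  have hmain := hasDerivAt_integral_of_dominated_loc_of_deriv_le (Metric.ball_mem_nhds z₀ one_pos)
    (Eventually.of_forall fun z => (hFc z).aestronglyMeasurable) hint hint' hbd hbint hdiffF
  have hd := hmain.2.differentiableAt
  rwa [show (fun x => ∫ θ, F x θ ∂μ) = fun z => ∮ w in C(0,s), φ (z-w)*G w from
    funext fun z => (key z).symm] at hd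

lemma swap_double {f g : ℂ → ℂ} {Kf Kg : Set ℂ}
    (hfo : IsOpen Kfᶜ) (hgo : IsOpen Kgᶜ)
    (hf : DifferentiableOn ℂ f Kfᶜ) (hg : DifferentiableOn ℂ g Kgᶜ)
    {r r' : ℝ} (hr : 0 < r) (hr' : 0 < r')
    (hKf : Kf ⊆ ball 0 r') (hKg : Kg ⊆ ball 0 r)
    {z : ℂ} (hz : r + r' < ‖z‖) :
    (∮ w in C(0, r), (∮ v in C(0, r'), (v - (z - w))⁻¹ • f v) * g w) =
      ∮ v in C(0, r'), (∮ w in C(0, r), (w - (z - v))⁻¹ • g w) * f v := by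
  have h2π : (0:ℝ) ≤ 2*Real.pi := by positivity
  set Ψ : ℝ → ℝ → ℂ := fun θ₁ θ₂ =>
    (circleMap 0 r' θ₁ * Complex.I) * (circleMap 0 r θ₂ * Complex.I) *
      (circleMap 0 r' θ₁ + circleMap 0 r θ₂ - z)⁻¹ *
      f (circleMap 0 r' θ₁) * g (circleMap 0 r θ₂) with hΨ
  have habs1 : ∀ θ : ℝ, ‖circleMap 0 r' θ‖ = r' := fun θ => by
    rw [norm_circleMap_zero, abs_of_pos hr']
  have habs2 : ∀ θ : ℝ, ‖circleMap 0 r θ‖ = r := fun θ => by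
    rw [norm_circleMap_zero, abs_of_pos hr]
  have hden : ∀ θ₁ θ₂ : ℝ, circleMap 0 r' θ₁ + circleMap 0 r θ₂ - z ≠ 0 := by
    intro θ₁ θ₂ h
    have h1 : z = circleMap 0 r' θ₁ + circleMap 0 r θ₂ := by
      have := sub_eq_zero.1 h; exact this.symm
    have h2 : ‖z‖ ≤ r' + r := by
      rw [h1]
      calc ‖_‖ ≤ ‖circleMap 0 r' θ₁‖ + ‖circleMap 0 r θ₂‖ :=
            norm_add_le _ _
        _ = r' + r := by rw [habs1, habs2]
    linarith
  have hfc : Continuous fun θ : ℝ => f (circleMap 0 r' θ) := by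
    refine (hf.continuousOn.mono ?_).comp_continuous (continuous_circleMap 0 r')
      fun θ => circleMap_mem_sphere 0 hr'.le θ
    intro v hv
    rw [mem_sphere_zero_iff_norm] at hv
    exact not_mem_of_norm_ge hKf hv.ge
  have hgc : Continuous fun θ : ℝ => g (circleMap 0 r θ) := by
    refine (hg.continuousOn.mono ?_).comp_continuous (continuous_circleMap 0 r)
      fun θ => circleMap_mem_sphere 0 hr.le θ
    intro v hv
    rw [mem_sphere_zero_iff_norm] at hv
    exact not_mem_of_norm_ge hKg hv.ge
  -- inner integrals as set integrals
  have innerL : ∀ w : ℂ, (∮ v in C(0, r'), (v - (z - w))⁻¹ • f v) =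
      ∫ θ₁ in Ioc (0:ℝ) (2*Real.pi),
        (circleMap 0 r' θ₁ * Complex.I) * ((circleMap 0 r' θ₁ - (z - w))⁻¹ * f (circleMap 0 r' θ₁)) := by
    intro w
    rw [circleIntegral, intervalIntegral.integral_of_le h2π]
    refine integral_congr_ae (Eventually.of_forall fun θ₁ => ?_)
    simp only [deriv_circleMap, smul_eq_mul]
    try ring
  have innerR : ∀ v : ℂ, (∮ w in C(0, r), (w - (z - v))⁻¹ • g w) =
      ∫ θ₂ in Ioc (0:ℝ) (2*Real.pi),
        (circleMap 0 r θ₂ * Complex.I) * ((circleMap 0 r θ₂ - (z - v))⁻¹ * g (circleMap 0 r θ₂)) := by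
    intro v
    rw [circleIntegral, intervalIntegral.integral_of_le h2π]
    refine integral_congr_ae (Eventually.of_forall fun θ₂ => ?_)
    simp only [deriv_circleMap, smul_eq_mul]
    try ring
  -- LHS as a double integral
  have hL : (∮ w in C(0, r), (∮ v in C(0, r'), (v - (z - w))⁻¹ • f v) * g w) =
      ∫ θ₂ in Ioc (0:ℝ) (2*Real.pi), ∫ θ₁ in Ioc (0:ℝ) (2*Real.pi), Ψ θ₁ θ₂ := by
    rw [circleIntegral, intervalIntegral.integral_of_le h2π]
    refine integral_congr_ae (Eventually.of_forall fun θ₂ => ?_)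
    simp only [innerL]
    simp only [deriv_circleMap, smul_eq_mul]
    have step : circleMap 0 r θ₂ * Complex.I *
        ((∫ θ₁ in Ioc (0:ℝ) (2*Real.pi),
          (circleMap 0 r' θ₁ * Complex.I) *
            ((circleMap 0 r' θ₁ - (z - circleMap 0 r θ₂))⁻¹ * f (circleMap 0 r' θ₁))) *
          g (circleMap 0 r θ₂)) =
        (circleMap 0 r θ₂ * Complex.I * g (circleMap 0 r θ₂)) •
          ∫ θ₁ in Ioc (0:ℝ) (2*Real.pi),
            (circleMap 0 r' θ₁ * Complex.I) *
              ((circleMap 0 r' θ₁ - (z - circleMap 0 r θ₂))⁻¹ * f (circleMap 0 r' θ₁)) := by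
      rw [smul_eq_mul]; ring
    rw [step, ← MeasureTheory.integral_smul]
    refine integral_congr_ae (Eventually.of_forall fun θ₁ => ?_)
    simp only [hΨ, smul_eq_mul]
    rw [show circleMap 0 r' θ₁ - (z - circleMap 0 r θ₂) =
        circleMap 0 r' θ₁ + circleMap 0 r θ₂ - z from by ring]
    ring
  -- RHS as a double integral
  have hR : (∮ v in C(0, r'), (∮ w in C(0, r), (w - (z - v))⁻¹ • g w) * f v) =
      ∫ θ₁ in Ioc (0:ℝ) (2*Real.pi), ∫ θ₂ in Ioc (0:ℝ) (2*Real.pi), Ψ θ₁ θ₂ := by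
    rw [circleIntegral, intervalIntegral.integral_of_le h2π]
    refine integral_congr_ae (Eventually.of_forall fun θ₁ => ?_)
    simp only [innerR]
    simp only [deriv_circleMap, smul_eq_mul]
    have step : circleMap 0 r' θ₁ * Complex.I *
        ((∫ θ₂ in Ioc (0:ℝ) (2*Real.pi),
          (circleMap 0 r θ₂ * Complex.I) *
            ((circleMap 0 r θ₂ - (z - circleMap 0 r' θ₁))⁻¹ * g (circleMap 0 r θ₂))) *
          f (circleMap 0 r' θ₁)) =
        (circleMap 0 r' θ₁ * Complex.I * f (circleMap 0 r' θ₁)) •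
          ∫ θ₂ in Ioc (0:ℝ) (2*Real.pi),
            (circleMap 0 r θ₂ * Complex.I) *
              ((circleMap 0 r θ₂ - (z - circleMap 0 r' θ₁))⁻¹ * g (circleMap 0 r θ₂)) := by
      rw [smul_eq_mul]; ring
    rw [step, ← MeasureTheory.integral_smul]
    refine integral_congr_ae (Eventually.of_forall fun θ₂ => ?_)
    simp only [hΨ, smul_eq_mul]
    rw [show circleMap 0 r θ₂ - (z - circleMap 0 r' θ₁) =
        circleMap 0 r' θ₁ + circleMap 0 r θ₂ - z from by ring]
    ring
  rw [hL, hR]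
  -- Fubini
  have hcont : Continuous fun p : ℝ × ℝ => Ψ p.2 p.1 := by
    have c1 : Continuous fun p : ℝ × ℝ => circleMap 0 r' p.2 :=
      (continuous_circleMap 0 r').comp continuous_snd
    have c2 : Continuous fun p : ℝ × ℝ => circleMap 0 r p.1 :=
      (continuous_circleMap 0 r).comp continuous_fst
    have cden : Continuous fun p : ℝ × ℝ =>
        (circleMap 0 r' p.2 + circleMap 0 r p.1 - z)⁻¹ :=
      ((c1.add c2).sub continuous_const).inv₀ fun p => hden p.2 p.1
    exact ((((c1.mul continuous_const).mul (c2.mul continuous_const)).mul cden).mul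
      (hfc.comp continuous_snd)).mul (hgc.comp continuous_fst)
  have hintg : Integrable (Function.uncurry fun θ₂ θ₁ => Ψ θ₁ θ₂)
      ((volume.restrict (Ioc (0:ℝ) (2*Real.pi))).prod
        (volume.restrict (Ioc (0:ℝ) (2*Real.pi)))) := by
    rw [Measure.prod_restrict]
    have : IntegrableOn (Function.uncurry fun θ₂ θ₁ => Ψ θ₁ θ₂)
        (Icc (0:ℝ) (2*Real.pi) ×ˢ Icc (0:ℝ) (2*Real.pi)) volume := by
      refine hcont.continuousOn.integrableOn_compact (isCompact_Icc.prod isCompact_Icc)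
    exact this.mono_set (prod_mono Ioc_subset_Icc_self Ioc_subset_Icc_self)
  exact MeasureTheory.integral_integral_swap hintg

end Stmt19

end Stmt19Aux

open Stmt19 in
/-- Commutativity of the convolution on `H¹_c(ℂ; O_ℂ)`: for `f` holomorphic outside the
compact `K`, `g` holomorphic outside the compact `L`, with `K ⊆ B(0,r')`, `L ⊆ B(0,r)`,
the difference `(f*g)(z) − (g*f)(z)` of the two contour-integral convolutions extends to
an entire function of `z`, where the formulas are valid for `|z| > r + r'`. -/
theorem stmt_19 (K L : Set ℂ) (hK : IsCompact K) (hL : IsCompact L)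
    (f g : ℂ → ℂ) (hf : DifferentiableOn ℂ f Kᶜ) (hg : DifferentiableOn ℂ g Lᶜ)
    (r r' : ℝ) (hr : 0 < r) (hr' : 0 < r')
    (hKr : K ⊆ ball 0 r') (hLr : L ⊆ ball 0 r) :
    ∃ h : ℂ → ℂ, Differentiable ℂ h ∧
      ∀ z : ℂ, r + r' < ‖z‖ →
        (2 * Real.pi * Complex.I : ℂ)⁻¹ * (∮ w in C(0, r), f (z - w) * g w) -
          (2 * Real.pi * Complex.I : ℂ)⁻¹ * (∮ w in C(0, r'), g (z - w) * f w) = h z := by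
  have hKo : IsOpen Kᶜ := hK.isClosed.isOpen_compl
  have hLo : IsOpen Lᶜ := hL.isClosed.isOpen_compl
  have hgsph : ContinuousOn g (sphere 0 r) := by
    refine hg.continuousOn.mono fun v hv => ?_
    rw [mem_sphere_zero_iff_norm] at hv
    exact not_mem_of_norm_ge hLr hv.ge
  have hfsph : ContinuousOn f (sphere 0 r') := by
    refine hf.continuousOn.mono fun v hv => ?_
    rw [mem_sphere_zero_iff_norm] at hv
    exact not_mem_of_norm_ge hKr hv.ge
  have hcplusf : Differentiable ℂ (cplus f r') := cplus_diff hKo hf hr' hKr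
  have hcplusg : Differentiable ℂ (cplus g r) := cplus_diff hLo hg hr hLr
  refine ⟨fun z => (2 * Real.pi * Complex.I : ℂ)⁻¹ *
    ((∮ w in C(0, r), cplus f r' (z - w) * g w) -
      (∮ w in C(0, r'), cplus g r (z - w) * f w)), ?_, ?_⟩
  · exact ((diff_conv hcplusf hr hgsph).sub (diff_conv hcplusg hr' hfsph)).const_mul _
  · intro z hz
    have hzw : ∀ w ∈ sphere (0:ℂ) r, r' < ‖z - w‖ := by
      intro w hw
      rw [mem_sphere_zero_iff_norm] at hw
      have h4 : ‖z‖ ≤ ‖z - w‖ + ‖w‖ := by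
        calc ‖z‖ = ‖(z - w) + w‖ := by ring_nf
          _ ≤ _ := norm_add_le _ _
      rw [hw] at h4; linarith
    have hzv : ∀ v ∈ sphere (0:ℂ) r', r < ‖z - v‖ := by
      intro v hv
      rw [mem_sphere_zero_iff_norm] at hv
      have h4 : ‖z‖ ≤ ‖z - v‖ + ‖v‖ := by
        calc ‖z‖ = ‖(z - v) + v‖ := by ring_nf
          _ ≤ _ := norm_add_le _ _
      rw [hv] at h4; linarith
    have hc1 : ContinuousOn (fun w => f (z - w) * g w) (sphere 0 r) := by
      refine ContinuousOn.mul ?_ hgsph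
      refine hf.continuousOn.comp ((continuous_const.sub continuous_id).continuousOn)
        fun w hw => ?_
      exact not_mem_of_norm_ge hKr (hzw w hw).le
    have hc2 : ContinuousOn (fun w => cplus f r' (z - w) * g w) (sphere 0 r) :=
      ((hcplusf.continuous.comp (continuous_const.sub continuous_id)).continuousOn).mul hgsph
    have hc3 : ContinuousOn (fun v => g (z - v) * f v) (sphere 0 r') := by
      refine ContinuousOn.mul ?_ hfsph
      refine hg.continuousOn.comp ((continuous_const.sub continuous_id).continuousOn)
        fun v hv => ?_
      exact not_mem_of_norm_ge hLr (hzv v hv).le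
    have hc4 : ContinuousOn (fun v => cplus g r (z - v) * f v) (sphere 0 r') :=
      ((hcplusg.continuous.comp (continuous_const.sub continuous_id)).continuousOn).mul hfsph
    have e1 : (∮ w in C(0, r), f (z - w) * g w) -
        (∮ w in C(0, r), cplus f r' (z - w) * g w) =
        -((2 * Real.pi * Complex.I : ℂ)⁻¹ *
          ∮ w in C(0, r), (∮ v in C(0, r'), (v - (z - w))⁻¹ • f v) * g w) := by
      rw [← circleIntegral.integral_sub (hc1.circleIntegrable hr.le)
        (hc2.circleIntegrable hr.le)]
      have hEq : EqOn (fun w => f (z - w) * g w - cplus f r' (z - w) * g w)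
          (fun w => (-(2 * Real.pi * Complex.I : ℂ)⁻¹) •
            ((∮ v in C(0, r'), (v - (z - w))⁻¹ • f v) * g w)) (sphere 0 r) := by
        intro w hw
        have hm := fminus_eq hKo hf hr' hKr (u := z - w) (hzw w hw)
        simp only [cInt] at hm
        simp only [smul_eq_mul] at hm ⊢
        calc f (z - w) * g w - cplus f r' (z - w) * g w
            = (f (z - w) - cplus f r' (z - w)) * g w := by ring
          _ = _ := by rw [hm]; ring
      rw [circleIntegral.integral_congr hr.le hEq, circleIntegral.integral_smul]
      simp only [smul_eq_mul]; ring
    have e2 : (∮ v in C(0, r'), g (z - v) * f v) -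
        (∮ v in C(0, r'), cplus g r (z - v) * f v) =
        -((2 * Real.pi * Complex.I : ℂ)⁻¹ *
          ∮ v in C(0, r'), (∮ w in C(0, r), (w - (z - v))⁻¹ • g w) * f v) := by
      rw [← circleIntegral.integral_sub (hc3.circleIntegrable hr'.le)
        (hc4.circleIntegrable hr'.le)]
      have hEq : EqOn (fun v => g (z - v) * f v - cplus g r (z - v) * f v)
          (fun v => (-(2 * Real.pi * Complex.I : ℂ)⁻¹) •
            ((∮ w in C(0, r), (w - (z - v))⁻¹ • g w) * f v)) (sphere 0 r') := by
        intro v hv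
        have hm := fminus_eq hLo hg hr hLr (u := z - v) (hzv v hv)
        simp only [cInt] at hm
        simp only [smul_eq_mul] at hm ⊢
        calc g (z - v) * f v - cplus g r (z - v) * f v
            = (g (z - v) - cplus g r (z - v)) * f v := by ring
          _ = _ := by rw [hm]; ring
      rw [circleIntegral.integral_congr hr'.le hEq, circleIntegral.integral_smul]
      simp only [smul_eq_mul]; ring
    have e3 := swap_double hKo hLo hf hg hr hr' hKr hLr (z := z) hz
    set c : ℂ := (2 * Real.pi * Complex.I : ℂ)⁻¹
    linear_combination c * e1 - c * e2 - (c * c) * e3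
end
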